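/- arXiv:1412.5506 — 15 statements merged into one kernel-verified Lean document; each statement's English description precedes it below -/
import Mathlib

section
/- Let N ≥ 1 and n : Fin N → ℕ with nᵢ ≥ 1 for all i, and let A = ⊕_{i=1}^{N} M_{n_i}(ℂ) be the direct sum of complex matrix algebras. For R ∈ ℂ with R ≠ 0 define the linear functional ε : A → ℂ by ε(a) = R·Σ_{i=1}^{N} n_i·Tr(a_i). Then the bilinear form (x,y) ↦ ε(x·y) on A is symmetric and nondegenerate, and for any basis {e_a} of A, with (B^{ab}) the inverse of the matrix (ε(e_a·e_b))_{a,b}, one has R·Σ_{a,b} B^{ab}·e_a·e_b = 1. -/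
/-! `ε` is `R` times the trace of the left regular representation, `a ↦ tr (x ↦ a x)`: on
`Mₙ(ℂ)` left multiplication by `a` acts on each of the `n` columns separately, so its trace is
`n · Tr a`. Symmetry and nondegeneracy of `ε(xy)` come from `Tr(xy) = Tr(yx)` and `Tr(x x*) > 0`
for `x ≠ 0`. For any symmetric nondegenerate `φ`, the `a`-th coordinate of `u` in the basis is
`Σ_b B^{ab} φ(e_b u)`, so by cyclicity `tr(L_w) = φ(w · Σ B^{ab} e_a e_b)`: the Casimir element
represents the regular trace through `φ`. For `φ = ε` it is therefore `R⁻¹ · 1`. -/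

open Matrix Module

noncomputable def Algebra.regularTrace (K A : Type*) [CommRing K] [Ring A] [Algebra K A] :
    A →ₗ[K] K :=
  LinearMap.trace K A ∘ₗ (Algebra.lmul K A).toLinearMap

theorem Algebra.regularTrace_apply {K A : Type*} [CommRing K] [Ring A] [Algebra K A] (w : A) :
    regularTrace K A w = LinearMap.trace K A (Algebra.lmul K A w) :=
  rfl

section Casimir

variable {K A ι : Type*} [CommRing K] [Ring A] [Algebra K A] [Fintype ι]

theorem Algebra.regularTrace_mul_comm (x y : A) :
    regularTrace K A (x * y) = regularTrace K A (y * x) := by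
  simp only [regularTrace_apply, map_mul (Algebra.lmul K A), LinearMap.trace_mul_comm]

variable (φ : A →ₗ[K] K) (e : Basis ι K A)

theorem Module.Basis.gram_mulVec_repr (u : A) :
    Matrix.of (fun a b => φ (e a * e b)) *ᵥ e.repr u = fun a => φ (e a * u) := by
  ext a
  conv_rhs => rw [← e.sum_repr u]
  simp only [mulVec, dotProduct, of_apply, Finset.mul_sum, mul_smul_comm, map_sum, map_smul,
    smul_eq_mul, mul_comm]

variable [DecidableEq ι]

theorem Module.Basis.repr_eq_mulVec {B : Matrix ι ι K}
    (hB : B * Matrix.of (fun a b => φ (e a * e b)) = 1) (u : A) :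
    e.repr u = B *ᵥ fun a => φ (e a * u) := by
  rw [← e.gram_mulVec_repr φ, mulVec_mulVec, hB, one_mulVec]

theorem Algebra.regularTrace_eq_apply_mul_casimir (hφ : ∀ x y, φ (x * y) = φ (y * x))
    {B : Matrix ι ι K} (hB : B * Matrix.of (fun a b => φ (e a * e b)) = 1) (w : A) :
    regularTrace K A w = φ (w * ∑ a, ∑ b, B a b • (e a * e b)) := by
  rw [regularTrace_apply, LinearMap.trace_eq_matrix_trace K e, Matrix.trace]
  simp only [diag_apply, Algebra.toMatrix_lmul', e.repr_eq_mulVec φ hB, mulVec, dotProduct,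
    Finset.mul_sum, mul_smul_comm, map_sum, map_smul, smul_eq_mul]
  refine Finset.sum_congr rfl fun a _ => Finset.sum_congr rfl fun b _ => ?_
  rw [hφ, mul_assoc]

theorem casimir_eq_of_regularTrace_eq (hφ : ∀ x y, φ (x * y) = φ (y * x))
    (hnd : ∀ x, (∀ y, φ (x * y) = 0) → x = 0)
    {B : Matrix ι ι K} (hB : B * Matrix.of (fun a b => φ (e a * e b)) = 1) {t : A}
    (ht : ∀ w, Algebra.regularTrace K A w = φ (w * t)) :
    ∑ a, ∑ b, B a b • (e a * e b) = t := by
  refine sub_eq_zero.mp (hnd _ fun w => ?_)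
  rw [hφ, mul_sub, map_sub, ← ht, ← Algebra.regularTrace_eq_apply_mul_casimir φ e hφ hB, sub_self]

end Casimir

theorem Matrix.stdBasis_repr_apply {R m n : Type*} [Semiring R] [Fintype m] [Finite n]
    (x : Matrix m n R) (i : m) (j : n) : (stdBasis R m n).repr x (i, j) = x i j := by
  simp [stdBasis]

theorem Algebra.regularTrace_pi_matrix {K ι : Type*} [CommRing K] [Fintype ι] [DecidableEq ι]
    {m : ι → Type*} [∀ i, Fintype (m i)] [∀ i, DecidableEq (m i)]
    (w : ∀ i, Matrix (m i) (m i) K) :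
    regularTrace K (∀ i, Matrix (m i) (m i) K) w = ∑ i, Fintype.card (m i) * (w i).trace := by
  rw [regularTrace_apply,
    LinearMap.trace_eq_matrix_trace K (Pi.basis fun i => stdBasis K (m i) (m i)), Matrix.trace,
    ← Finset.univ_sigma_univ, Finset.sum_sigma]
  refine Finset.sum_congr rfl fun i _ => ?_
  simp only [diag_apply, Algebra.toMatrix_lmul', Fintype.sum_prod_type]
  simp [stdBasis_repr_apply, stdBasis_eq_single, mul_single_apply_same, Matrix.trace,
    Finset.mul_sum]

theorem Matrix.sum_mul_trace_mul_conjTranspose_eq_zero_iff {R ι : Type*} [CommRing R]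
    [PartialOrder R] [IsStrictOrderedRing R] [StarRing R] [StarOrderedRing R] [NoZeroDivisors R]
    [Fintype ι] {m : ι → Type*} [∀ i, Fintype (m i)] {c : ι → R} (hc : ∀ i, 0 < c i)
    {x : ∀ i, Matrix (m i) (m i) R} :
    ∑ i, c i * (x i * (x i)ᴴ).trace = 0 ↔ x = 0 := by
  refine ⟨fun h => funext fun i => ?_, fun h => by simp [h]⟩
  have hnonneg : ∀ j ∈ Finset.univ, 0 ≤ c j * (x j * (x j)ᴴ).trace := fun j _ =>
    mul_nonneg (hc j).le (posSemidef_self_mul_conjTranspose (x j)).trace_nonneg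
  have hi := (Finset.sum_eq_zero_iff_of_nonneg hnonneg).mp h i (Finset.mem_univ i)
  exact trace_mul_conjTranspose_self_eq_zero_iff.mp ((mul_eq_zero.mp hi).resolve_left (hc i).ne')

theorem statement0_general (N : ℕ) (n : Fin N → ℕ) (hn : ∀ i, 1 ≤ n i)
    (R : ℂ) (hR : R ≠ 0)
    (ε : (∀ i, Matrix (Fin (n i)) (Fin (n i)) ℂ) → ℂ)
    (hε : ∀ a, ε a = R * ∑ i, (n i : ℂ) * Matrix.trace (a i)) :
    (∀ x y, ε (x * y) = ε (y * x)) ∧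
    (∀ x, (∀ y, ε (x * y) = 0) → x = 0) ∧
    (∀ (ι : Type) [Fintype ι] [DecidableEq ι]
      (e : Module.Basis ι ℂ (∀ i, Matrix (Fin (n i)) (Fin (n i)) ℂ))
      (B : Matrix ι ι ℂ),
      Matrix.of (fun a b => ε (e a * e b)) * B = 1 →
      B * Matrix.of (fun a b => ε (e a * e b)) = 1 →
      R • (∑ a, ∑ b, B a b • (e a * e b)) = 1) := by
  let φ : (∀ i, Matrix (Fin (n i)) (Fin (n i)) ℂ) →ₗ[ℂ] ℂ := R • Algebra.regularTrace ℂ _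
  obtain rfl : ε = φ := funext fun a => by simp [φ, hε, Algebra.regularTrace_pi_matrix]
  have hsymm : ∀ x y, φ (x * y) = φ (y * x) := fun x y => by
    simp only [φ, LinearMap.smul_apply, Algebra.regularTrace_mul_comm]
  have hnondeg : ∀ x, (∀ y, φ (x * y) = 0) → x = 0 := fun x hx => by
    have h := (mul_eq_zero.mp ((hε _).symm.trans (hx (star x)))).resolve_left hR
    open scoped ComplexOrder in
    exact (sum_mul_trace_mul_conjTranspose_eq_zero_iff fun i => by exact_mod_cast hn i).mp h
  refine ⟨hsymm, hnondeg, fun ι _ _ e B _ hB => ?_⟩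
  rw [casimir_eq_of_regularTrace_eq φ e hsymm hnondeg hB (t := R⁻¹ • 1) fun w => ?_, smul_smul,
    mul_inv_cancel₀ hR, one_smul]
  simp [φ, ← mul_assoc, inv_mul_cancel₀ hR]

/-- For `A = ⊕ᵢ Mₙᵢ(ℂ)` and `ε(a) = R·Σᵢ nᵢ·Tr(aᵢ)` with `R ≠ 0`, the bilinear
form `(x,y) ↦ ε(x·y)` is symmetric and nondegenerate, and for any basis `{eₐ}` with `(B^{ab})`
the inverse of `(ε(eₐ·e_b))`, one has `R·Σ B^{ab}·eₐ·e_b = 1`. -/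
theorem statement0 (N : ℕ) (hN : 1 ≤ N) (n : Fin N → ℕ) (hn : ∀ i, 1 ≤ n i)
    (R : ℂ) (hR : R ≠ 0)
    (ε : (∀ i, Matrix (Fin (n i)) (Fin (n i)) ℂ) → ℂ)
    (hε : ∀ a, ε a = R * ∑ i, (n i : ℂ) * Matrix.trace (a i)) :
    (∀ x y, ε (x * y) = ε (y * x)) ∧
    (∀ x, (∀ y, ε (x * y) = 0) → x = 0) ∧
    (∀ (ι : Type) [Fintype ι] [DecidableEq ι]
      (e : Module.Basis ι ℂ (∀ i, Matrix (Fin (n i)) (Fin (n i)) ℂ))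
      (B : Matrix ι ι ℂ),
      Matrix.of (fun a b => ε (e a * e b)) * B = 1 →
      B * Matrix.of (fun a b => ε (e a * e b)) = 1 →
      R • (∑ a, ∑ b, B a b • (e a * e b)) = 1) :=
  statement0_general N n hn R hR ε hε
end

section
/- Let N ≥ 1, n : Fin N → ℕ with nᵢ ≥ 1, A = ⊕_{i=1}^{N} M_{n_i}(ℂ), R ∈ ℂ with R ≠ 0, and ε(a) = R·Σ_{i=1}^{N} n_i·Tr(a_i). Fix any basis {e_a} of A, let (B^{ab}) be the inverse of the matrix (ε(e_a·e_b))_{a,b}, and define z := Σ_{a,b,c,d} B^{ac}·B^{bd}·e_a·e_b·e_c·e_d ∈ A. Then for every natural number g, R·ε(z^g) = R^{2−2g}·Σ_{i=1}^{N} n_i^{2−2g}, where powers with negative integer exponents are taken in ℂ (R ≠ 0 and each n_i ≠ 0). -/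
/-!
Expanding `u = ∑ B^{ac} ε(e_c u) e_a` against the matrix units `u = E^i_{qp}` shows that the
Casimir tensor `∑ B^{ac} e_a ⊗ e_c` has entries `δ_{lp} δ_{kq} / (R n_i)` in the block `i`.
Hence `x ↦ ∑ B^{ac} e_a x e_c` sends `x` to the central element with blocks `tr(x_i) / (R n_i)`,
and contracting once more shows that `z` is the scalar `(R n_i)^{-2}` on the block `i`; so
`R ε(z^g) = R² ∑ n_i² (R n_i)^{-2g}`.
-/

open Finset Matrix

section Frobenius

variable {K A ι : Type*} [CommRing K] [Ring A] [Algebra K A] [Fintype ι]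

def mulGram (φ : A →ₗ[K] K) (e : ι → A) : Matrix ι ι K := Matrix.of fun a b => φ (e a * e b)

theorem apply_basis_mul_eq_mulGram_mulVec (φ : A →ₗ[K] K) (e : Module.Basis ι K A) (u : A)
    (c : ι) : φ (e c * u) = (mulGram φ e *ᵥ e.repr u) c :=
  calc φ (e c * u) = φ (e c * ∑ b, e.repr u b • e b) := by rw [e.sum_repr]
    _ = _ := by
      simp only [mul_sum, mul_smul_comm, map_sum, map_smul, smul_eq_mul, mulVec, dotProduct,
        mulGram, of_apply, mul_comm]

theorem sum_sum_mul_smul_basis_eq [DecidableEq ι] (φ : A →ₗ[K] K) (e : Module.Basis ι K A)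
    {B : Matrix ι ι K} (hB : B * mulGram φ e = 1) (u : A) :
    ∑ a, ∑ c, (B a c * φ (e c * u)) • e a = u :=
  calc ∑ a, ∑ c, (B a c * φ (e c * u)) • e a
        = ∑ a, (B *ᵥ (mulGram φ e *ᵥ e.repr u)) a • e a := by
        simp only [apply_basis_mul_eq_mulGram_mulVec, ← sum_smul]; rfl
    _ = u := by rw [mulVec_mulVec, hB, one_mulVec, e.sum_repr]

def sandwich (B : Matrix ι ι K) (e : ι → A) (x : A) : A := ∑ a, ∑ c, B a c • (e a * x * e c)

def handleElement (B : Matrix ι ι K) (e : ι → A) : A :=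
  ∑ a, ∑ b, ∑ c, ∑ d, (B a c * B b d) • (e a * e b * e c * e d)

theorem handleElement_eq_sum_sandwich_mul (B : Matrix ι ι K) (e : ι → A) :
    handleElement B e = ∑ b, ∑ d, B b d • (sandwich B e (e b) * e d) := by
  simp only [handleElement, sandwich, sum_mul, smul_sum, smul_mul_assoc, smul_smul]
  rw [sum_comm]
  refine sum_congr rfl fun b _ => ?_
  conv_rhs => rw [sum_comm]
  refine sum_congr rfl fun a _ => ?_
  conv_rhs => rw [sum_comm]
  simp only [mul_comm (B b _)]

end Frobenius

section WeightedTrace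

variable {K β : Type*} [CommRing K] [Fintype β] (R : K) (n : β → ℕ)

def weightedTrace : (∀ i, Matrix (Fin (n i)) (Fin (n i)) K) →ₗ[K] K :=
  R • ∑ i, (n i : K) • ((traceLinearMap (Fin (n i)) K K).comp (LinearMap.proj i))

theorem weightedTrace_apply (x : ∀ i, Matrix (Fin (n i)) (Fin (n i)) K) :
    weightedTrace R n x = R * ∑ i, (n i : K) * (x i).trace := by
  simp [weightedTrace]

theorem weightedTrace_mul_single [DecidableEq β] (x : ∀ i, Matrix (Fin (n i)) (Fin (n i)) K)
    (i : β) (p q : Fin (n i)) :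
    weightedTrace R n (x * Pi.single i (single q p 1)) = R * n i * x i p q := by
  rw [weightedTrace_apply, sum_eq_single i (fun j _ hj => by simp [hj]) (by simp)]
  simp [trace_mul_single, mul_assoc]

end WeightedTrace

section Casimir

variable {K β ι : Type*} [Field K] [Fintype β] [DecidableEq β] [Fintype ι] [DecidableEq ι]
  (R : K) (n : β → ℕ) (e : Module.Basis ι K (∀ i, Matrix (Fin (n i)) (Fin (n i)) K))
  {B : Matrix ι ι K}

theorem sum_sum_mul_basis_apply_mul_basis_apply (hB : B * mulGram (weightedTrace R n) e = 1)
    {i : β} (hRn : R * n i ≠ 0) (k l p q : Fin (n i)) :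
    ∑ a, ∑ c, B a c * e a i k l * e c i p q = if l = p ∧ k = q then (R * n i)⁻¹ else 0 := by
  have expand := congrFun (congrFun (congrFun
    (sum_sum_mul_smul_basis_eq _ e hB (Pi.single i (single q p 1))) i) k) l
  simp only [weightedTrace_mul_single, Finset.sum_apply, Pi.smul_apply, Matrix.sum_apply,
    Matrix.smul_apply, smul_eq_mul, Pi.single_eq_same, single_apply] at expand
  have hS : R * n i * ∑ a, ∑ c, B a c * e a i k l * e c i p q
      = if l = p ∧ k = q then 1 else 0 := by
    simp only [show (l = p ∧ k = q) ↔ (q = k ∧ p = l) by tauto, ← expand, mul_sum]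
    exact sum_congr rfl fun a _ => sum_congr rfl fun c _ => by ring
  rw [← inv_mul_cancel_left₀ hRn (∑ a, ∑ c, B a c * e a i k l * e c i p q), hS]
  split_ifs <;> simp

theorem sandwich_eq (hB : B * mulGram (weightedTrace R n) e = 1) (hRn : ∀ j, R * n j ≠ 0)
    (x : ∀ i, Matrix (Fin (n i)) (Fin (n i)) K) :
    sandwich B e x = fun j => ((R * n j)⁻¹ * (x j).trace) • 1 := by
  funext j; ext m t
  simp only [sandwich, Finset.sum_apply, Matrix.sum_apply, Pi.smul_apply, Matrix.smul_apply,
    smul_eq_mul, Pi.mul_apply, mul_apply, mul_sum, sum_mul]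
  simp_rw [sum_comm (γ := ι) (α := Fin (n j))]
  have factor : ∀ s k, ∑ a, ∑ c, B a c * (e a j m k * x j k s * e c j s t)
      = x j k s * ∑ a, ∑ c, B a c * e a j m k * e c j s t := fun s k => by
    simp only [mul_sum]
    exact sum_congr rfl fun a _ => sum_congr rfl fun c _ => by ring
  simp only [factor, sum_sum_mul_basis_apply_mul_basis_apply R n e hB (hRn j)]
  by_cases hmt : m = t
  · subst hmt
    simp [trace, mul_comm, mul_sum]
  · simp [hmt]

theorem handleElement_eq (hB : B * mulGram (weightedTrace R n) e = 1)
    (hRn : ∀ j, R * n j ≠ 0) :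
    handleElement B e = fun j => (R * n j)⁻¹ ^ 2 • (1 : Matrix (Fin (n j)) (Fin (n j)) K) := by
  rw [handleElement_eq_sum_sandwich_mul]
  simp only [sandwich_eq R n e hB hRn]
  funext j; ext m t
  simp only [Finset.sum_apply, Matrix.sum_apply, Pi.smul_apply, Matrix.smul_apply,
    smul_eq_mul, Pi.mul_apply, smul_mul, one_mul, trace, Matrix.diag, mul_sum, sum_mul]
  simp_rw [sum_comm (γ := ι) (α := Fin (n j))]
  have factor : ∀ k, ∑ b, ∑ d, B b d * ((R * n j)⁻¹ * e b j k k * e d j m t)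
      = (R * n j)⁻¹ * ∑ b, ∑ d, B b d * e b j k k * e d j m t := fun k => by
    simp only [mul_sum]
    exact sum_congr rfl fun b _ => sum_congr rfl fun d _ => by ring
  simp only [factor, sum_sum_mul_basis_apply_mul_basis_apply R n e hB (hRn j)]
  by_cases hmt : m = t
  · subst hmt
    simp [sq]
  · simp [hmt, ite_and]

end Casimir

theorem zpow_two_sub_two_mul {K : Type*} [DivisionRing K] {w : K} (hw : w ≠ 0) (g : ℕ) :
    w ^ ((2 : ℤ) - 2 * g) = w ^ 2 * (w⁻¹ ^ 2) ^ g := by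
  rw [zpow_sub₀ hw, ← pow_mul, inv_pow, div_eq_mul_inv]
  norm_cast

theorem statement2_general (N : ℕ) (n : Fin N → ℕ) (hn : ∀ i, 1 ≤ n i)
    (R : ℂ) (hR : R ≠ 0)
    (ε : (∀ i, Matrix (Fin (n i)) (Fin (n i)) ℂ) → ℂ)
    (hε : ∀ a, ε a = R * ∑ i, (n i : ℂ) * Matrix.trace (a i)) :
    ∀ (ι : Type) [Fintype ι] [DecidableEq ι]
      (e : Module.Basis ι ℂ (∀ i, Matrix (Fin (n i)) (Fin (n i)) ℂ))
      (B : Matrix ι ι ℂ),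
      Matrix.of (fun a b => ε (e a * e b)) * B = 1 →
      B * Matrix.of (fun a b => ε (e a * e b)) = 1 →
      ∀ g : ℕ,
        R * ε ((∑ a, ∑ b, ∑ c, ∑ d, (B a c * B b d) • (e a * e b * e c * e d)) ^ g)
          = R ^ ((2 : ℤ) - 2 * g) * ∑ i, (n i : ℂ) ^ ((2 : ℤ) - 2 * g) := by
  intro ι _ _ e B _ hB g
  obtain rfl : ε = weightedTrace R n :=
    funext fun a => (hε a).trans (weightedTrace_apply R n a).symm
  have hRn : ∀ i, R * n i ≠ 0 := fun i =>
    mul_ne_zero hR (Nat.cast_ne_zero.2 (Nat.one_le_iff_ne_zero.1 (hn i)))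
  change R * weightedTrace R n (handleElement B e ^ g) = _
  rw [handleElement_eq R n e hB hRn]
  simp only [Pi.pow_def, smul_pow, one_pow, weightedTrace_apply, trace_smul, trace_one,
    Fintype.card_fin, smul_eq_mul, mul_sum]
  refine sum_congr rfl fun i _ => ?_
  rw [← mul_zpow, zpow_two_sub_two_mul (hRn i)]
  ring

/-- For `A = ⊕ᵢ Mₙᵢ(ℂ)`, `ε(a) = R·Σᵢ nᵢ·Tr(aᵢ)` with `R ≠ 0`, any basis `{eₐ}`
with `(B^{ab})` the inverse of `(ε(eₐ·e_b))`, and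
`z = Σ B^{ac}·B^{bd}·eₐ·e_b·e_c·e_d`, one has `R·ε(z^g) = R^{2-2g}·Σᵢ nᵢ^{2-2g}` for all `g`. -/
theorem statement2 (N : ℕ) (hN : 1 ≤ N) (n : Fin N → ℕ) (hn : ∀ i, 1 ≤ n i)
    (R : ℂ) (hR : R ≠ 0)
    (ε : (∀ i, Matrix (Fin (n i)) (Fin (n i)) ℂ) → ℂ)
    (hε : ∀ a, ε a = R * ∑ i, (n i : ℂ) * Matrix.trace (a i)) :
    ∀ (ι : Type) [Fintype ι] [DecidableEq ι]
      (e : Module.Basis ι ℂ (∀ i, Matrix (Fin (n i)) (Fin (n i)) ℂ))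
      (B : Matrix ι ι ℂ),
      Matrix.of (fun a b => ε (e a * e b)) * B = 1 →
      B * Matrix.of (fun a b => ε (e a * e b)) = 1 →
      ∀ g : ℕ,
        R * ε ((∑ a, ∑ b, ∑ c, ∑ d, (B a c * B b d) • (e a * e b * e c * e d)) ^ g)
          = R ^ ((2 : ℤ) - 2 * g) * ∑ i, (n i : ℂ) ^ ((2 : ℤ) - 2 * g) :=
  statement2_general N n hn R hR ε hε
end

section
/- Let n ≥ 1, let A = M_n(ℍ) be the ℝ-algebra of n×n quaternionic matrices, let R ∈ ℝ with R ≠ 0, and define ε : A → ℝ by ε(a) = 4·R·n·Re(Tr(a)). Fix any ℝ-basis {e_a} of A, let (B^{ab}) be the inverse of the matrix (ε(e_a·e_b))_{a,b}, and define z := Σ_{a,b,c,d} B^{ac}·B^{bd}·e_a·e_b·e_c·e_d ∈ A. Then for every natural number g, R·ε(z^g) = 2^{2−2g}·R^{2−2g}·n^{2−2g}, where powers with negative integer exponents are taken in ℝ. -/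
/-!
Write `S x = ∑ B^{ac} eₐ x e_c`. Since `(x, y) ↦ ε (x y)` is a nondegenerate trace form whose
Gram matrix is inverse to `B`, `ε (S x * y)` is the trace of the operator `w ↦ x w y`. On `Mₙ(ℍ)`
that trace is `4 Re Tr x · Re Tr y = κ ε(x) ε(y)` with `κ = (2Rn)⁻²`, so nondegeneracy forces
`S x = κ ε(x) • 1`. Then `z = ∑ B^{bd} S(e_b) e_d = κ • ∑_d (∑_b ε(e_b) B^{bd}) e_d = κ • 1`,
and `R ε(z^g) = R κ^g ε(1) = (2Rn)^{2-2g}`.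
-/

open Module

section CasimirElement

variable {K A ι : Type*} [CommRing K] [Ring A] [Algebra K A] [Fintype ι] [DecidableEq ι]
  {ε : A →ₗ[K] K} {e : Basis ι K A} {B : Matrix ι ι K}

theorem Module.Basis.repr_eq_sum_of_pairing_mul_eq_one
    (hB : Matrix.of (fun a b => ε (e a * e b)) * B = 1) (x : A) (d : ι) :
    e.repr x d = ∑ b, ε (x * e b) * B b d := by
  have hrow (a : ι) : ∑ b, ε (e a * e b) * B b d = if a = d then 1 else 0 := by
    rw [← Matrix.one_apply, ← hB, Matrix.mul_apply]
    rfl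
  conv_rhs => rw [← e.sum_repr x]
  simp only [Finset.sum_mul, map_sum, smul_mul_assoc, map_smul, smul_eq_mul, mul_assoc]
  rw [Finset.sum_comm]
  simp only [← Finset.mul_sum, hrow]
  simp

theorem eq_zero_of_forall_pairing_eq_zero
    (hB : Matrix.of (fun a b => ε (e a * e b)) * B = 1) {w : A} (hw : ∀ y, ε (w * y) = 0) :
    w = 0 :=
  e.ext_elem fun d => by simp [e.repr_eq_sum_of_pairing_mul_eq_one hB, hw]

theorem LinearMap.trace_eq_sum_pairing (hB : Matrix.of (fun a b => ε (e a * e b)) * B = 1)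
    (f : A →ₗ[K] A) : LinearMap.trace K A f = ∑ c, ∑ a, ε (f (e c) * e a) * B a c := by
  rw [LinearMap.trace_eq_matrix_trace K e, Matrix.trace]
  simp_rw [Matrix.diag, LinearMap.toMatrix_apply, e.repr_eq_sum_of_pairing_mul_eq_one hB]

theorem pairing_sum_sandwich_eq_trace (hB : Matrix.of (fun a b => ε (e a * e b)) * B = 1)
    (hε : ∀ x y, ε (x * y) = ε (y * x)) (x y : A) :
    ε ((∑ a, ∑ c, B a c • (e a * x * e c)) * y)
      = LinearMap.trace K A (LinearMap.mulLeftRight K (x, y)) := by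
  rw [LinearMap.trace_eq_sum_pairing hB, Finset.sum_comm]
  simp_rw [Finset.sum_mul, map_sum, smul_mul_assoc, map_smul, smul_eq_mul,
    LinearMap.mulLeftRight_apply]
  refine Finset.sum_congr rfl fun c _ => Finset.sum_congr rfl fun a _ => ?_
  rw [mul_comm, hε (x * e c * y), ← mul_assoc, ← mul_assoc]

variable (κ : K)

theorem sum_sandwich_eq_smul_one (hB : Matrix.of (fun a b => ε (e a * e b)) * B = 1)
    (hε : ∀ x y, ε (x * y) = ε (y * x))
    (htr : ∀ x y, LinearMap.trace K A (LinearMap.mulLeftRight K (x, y)) = κ * ε x * ε y) (x : A) :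
    ∑ a, ∑ c, B a c • (e a * x * e c) = (κ * ε x) • 1 := by
  rw [← sub_eq_zero]
  refine eq_zero_of_forall_pairing_eq_zero hB fun y => ?_
  rw [sub_mul, map_sub, pairing_sum_sandwich_eq_trace hB hε, htr, smul_one_mul, map_smul,
    smul_eq_mul, sub_self]

theorem casimir_eq_smul_one (hB : Matrix.of (fun a b => ε (e a * e b)) * B = 1)
    (hε : ∀ x y, ε (x * y) = ε (y * x))
    (htr : ∀ x y, LinearMap.trace K A (LinearMap.mulLeftRight K (x, y)) = κ * ε x * ε y) :
    ∑ a, ∑ b, ∑ c, ∑ d, (B a c * B b d) • (e a * e b * e c * e d) = κ • 1 := by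
  calc ∑ a, ∑ b, ∑ c, ∑ d, (B a c * B b d) • (e a * e b * e c * e d)
      = ∑ b, ∑ d, B b d • ((∑ a, ∑ c, B a c • (e a * e b * e c)) * e d) := by
        simp only [Finset.sum_mul, Finset.smul_sum, smul_mul_assoc, smul_smul]
        rw [Finset.sum_comm]
        refine Finset.sum_congr rfl fun b _ =>
          ((Finset.sum_congr rfl fun a _ => Finset.sum_comm).trans Finset.sum_comm).trans ?_
        exact Finset.sum_congr rfl fun d _ => Finset.sum_congr rfl fun a _ =>
          Finset.sum_congr rfl fun c _ => by rw [mul_comm]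
    _ = ∑ d, (κ * ∑ b, ε (1 * e b) * B b d) • e d := by
        simp_rw [sum_sandwich_eq_smul_one κ hB hε htr, smul_one_mul, smul_smul, one_mul,
          Finset.mul_sum, Finset.sum_smul]
        rw [Finset.sum_comm]
        refine Finset.sum_congr rfl fun d _ => Finset.sum_congr rfl fun b _ => ?_
        congr 1
        ring
    _ = κ • 1 := by
        simp_rw [← e.repr_eq_sum_of_pairing_mul_eq_one hB, mul_smul, ← Finset.smul_sum,
          e.sum_repr]

end CasimirElement

theorem Module.Basis.matrix_repr_apply {ι R M m n : Type*} [Fintype m] [Fintype n] [Semiring R]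
    [AddCommMonoid M] [Module R M] (b : Basis ι R M) (x : Matrix m n M) (i : m) (j : n) (k : ι) :
    (b.matrix m n).repr x (i, j, k) = b.repr (x i j) k :=
  rfl

theorem Matrix.mul_single_mul_apply_same {m α : Type*} [Fintype m] [DecidableEq m] [Semiring α]
    (u v : Matrix m m α) (i j : m) (c : α) :
    (u * Matrix.single i j c * v) i j = u i i * c * v j j := by
  rw [Matrix.mul_apply, Finset.sum_eq_single j (fun k _ hk => by
    rw [Matrix.mul_single_apply_of_ne _ _ _ _ _ hk, zero_mul]) (by simp),
    Matrix.mul_single_apply_same]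

theorem Matrix.trace_mulLeftRight {K D m ι : Type*} [CommRing K] [Ring D] [Algebra K D]
    [Fintype m] [DecidableEq m] [Fintype ι] [DecidableEq ι] (b : Basis ι K D)
    (u v : Matrix m m D) :
    LinearMap.trace K _ (LinearMap.mulLeftRight K (u, v))
      = ∑ i, ∑ j, LinearMap.trace K D (LinearMap.mulLeftRight K (u i i, v j j)) := by
  simp_rw [LinearMap.trace_eq_matrix_trace K (b.matrix m m), LinearMap.trace_eq_matrix_trace K b,
    Matrix.trace, Fintype.sum_prod_type, Matrix.diag, LinearMap.toMatrix_apply, Basis.matrix_apply,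
    Basis.matrix_repr_apply, LinearMap.mulLeftRight_apply, Matrix.mul_single_mul_apply_same]

theorem Quaternion.re_sum {R ι : Type*} [CommRing R] (s : Finset ι) (f : ι → Quaternion R) :
    (∑ i ∈ s, f i).re = ∑ i ∈ s, (f i).re :=
  map_sum (QuaternionAlgebra.reₗ (-1) 0 (-1) : Quaternion R →ₗ[R] R) f s

theorem Quaternion.trace_mulLeftRight {R : Type*} [CommRing R] (p r : Quaternion R) :
    LinearMap.trace R _ (LinearMap.mulLeftRight R (p, r)) = 4 * p.re * r.re := by
  let b : Basis (Fin 4) R (Quaternion R) := QuaternionAlgebra.basisOneIJK (-1) 0 (-1)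
  have hrepr (q : Quaternion R) : ⇑(b.repr q) = ![q.re, q.imI, q.imJ, q.imK] := rfl
  have hb : ⇑b = ![⟨1, 0, 0, 0⟩, ⟨0, 1, 0, 0⟩, ⟨0, 0, 1, 0⟩, ⟨0, 0, 0, 1⟩] := by
    funext i
    refine b.repr.injective (Finsupp.ext fun q => ?_)
    rw [b.repr_self, Finsupp.single_apply, hrepr]
    fin_cases i <;> fin_cases q <;> simp
  rw [LinearMap.trace_eq_matrix_trace R b, Matrix.trace, Fin.sum_univ_four]
  simp only [Matrix.diag, LinearMap.toMatrix_apply, hrepr, hb, LinearMap.mulLeftRight_apply]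
  simp only [Quaternion.re_mul, Quaternion.imI_mul, Quaternion.imJ_mul, Quaternion.imK_mul]
  simp
  ring

theorem Matrix.trace_mulLeftRight_quaternion {R m : Type*} [CommRing R] [Fintype m]
    [DecidableEq m] (u v : Matrix m m (Quaternion R)) :
    LinearMap.trace R _ (LinearMap.mulLeftRight R (u, v)) = 4 * u.trace.re * v.trace.re := by
  rw [Matrix.trace_mulLeftRight (Module.Free.chooseBasis R (Quaternion R)), mul_assoc,
    Matrix.trace, Matrix.trace, Quaternion.re_sum, Quaternion.re_sum, Finset.sum_mul_sum,
    Finset.mul_sum]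
  simp only [Quaternion.trace_mulLeftRight, Finset.mul_sum, mul_assoc, Matrix.diag]

theorem Matrix.re_trace_mul_comm {R m : Type*} [CommRing R] [Fintype m]
    (x y : Matrix m m (Quaternion R)) : (x * y).trace.re = (y * x).trace.re := by
  simp only [Matrix.trace, Matrix.diag, Matrix.mul_apply, Quaternion.re_sum, Quaternion.re_mul]
  rw [Finset.sum_comm]
  refine Finset.sum_congr rfl fun i _ => Finset.sum_congr rfl fun j _ => ?_
  ring

noncomputable def Matrix.reTrace (R m : Type*) [CommRing R] [Fintype m] :
    Matrix m m (Quaternion R) →ₗ[R] R :=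
  (QuaternionAlgebra.reₗ (-1) 0 (-1) : Quaternion R →ₗ[R] R).comp
    (Matrix.traceLinearMap m R (Quaternion R))

theorem Matrix.reTrace_apply {R m : Type*} [CommRing R] [Fintype m]
    (x : Matrix m m (Quaternion R)) : Matrix.reTrace R m x = x.trace.re :=
  rfl

/-- For `A = Mₙ(ℍ)` (an ℝ-algebra), `ε(a) = 4·R·n·Re(Tr(a))` with `R ≠ 0`, any
ℝ-basis `{eₐ}` with `(B^{ab})` the inverse of `(ε(eₐ·e_b))`, and
`z = Σ B^{ac}·B^{bd}·eₐ·e_b·e_c·e_d`, one has `R·ε(z^g) = 2^{2-2g}·R^{2-2g}·n^{2-2g}`. -/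
theorem statement3 (n : ℕ) (hn : 1 ≤ n) (R : ℝ) (hR : R ≠ 0)
    (ε : Matrix (Fin n) (Fin n) (Quaternion ℝ) → ℝ)
    (hε : ∀ a, ε a = 4 * R * n * (Matrix.trace a).re) :
    ∀ (ι : Type) [Fintype ι] [DecidableEq ι]
      (e : Module.Basis ι ℝ (Matrix (Fin n) (Fin n) (Quaternion ℝ)))
      (B : Matrix ι ι ℝ),
      Matrix.of (fun a b => ε (e a * e b)) * B = 1 →
      B * Matrix.of (fun a b => ε (e a * e b)) = 1 →
      ∀ g : ℕ,
        R * ε ((∑ a, ∑ b, ∑ c, ∑ d, (B a c * B b d) • (e a * e b * e c * e d)) ^ g)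
          = 2 ^ ((2 : ℤ) - 2 * g) * R ^ ((2 : ℤ) - 2 * g) * (n : ℝ) ^ ((2 : ℤ) - 2 * g) := by
  intro ι _ _ e B hB _ g
  have hn0 : (n : ℝ) ≠ 0 := by exact_mod_cast (by omega : n ≠ 0)
  set εL := (4 * R * n) • Matrix.reTrace ℝ (Fin n)
  have hεL : ε = εL := funext hε
  rw [hεL] at hB ⊢
  have hcomm (x y : Matrix (Fin n) (Fin n) (Quaternion ℝ)) : εL (x * y) = εL (y * x) := by
    simp only [εL, LinearMap.smul_apply, Matrix.reTrace_apply, Matrix.re_trace_mul_comm]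
  have htr (x y : Matrix (Fin n) (Fin n) (Quaternion ℝ)) :
      LinearMap.trace ℝ _ (LinearMap.mulLeftRight ℝ (x, y))
        = ((2 * R * n) ^ 2)⁻¹ * εL x * εL y := by
    simp only [εL, LinearMap.smul_apply, smul_eq_mul, Matrix.reTrace_apply,
      Matrix.trace_mulLeftRight_quaternion]
    field_simp
    ring
  rw [casimir_eq_smul_one _ hB hcomm htr, smul_pow, one_pow, map_smul, smul_eq_mul]
  simp only [εL, LinearMap.smul_apply, smul_eq_mul, Matrix.reTrace_apply, Matrix.trace_one,
    Fintype.card_fin, Quaternion.re_natCast]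
  rw [← mul_zpow, ← mul_zpow, zpow_sub₀ (by positivity), zpow_mul, zpow_natCast, zpow_ofNat,
    inv_pow]
  field_simp
  ring
end

section
/- Let n ≥ 1 and let * : M_n(ℂ) → M_n(ℂ) be a ℂ-linear involution, i.e. a ℂ-linear map satisfying (a·b)* = b*·a* for all a,b and (a*)* = a for all a. Then there exist an invertible matrix s ∈ M_n(ℂ) and μ ∈ {1, −1} such that sᵀ = μ·s and a* = s·aᵀ·s⁻¹ for all a ∈ M_n(ℂ). -/
/-!
`a ↦ (aᵀ)*` is an algebra automorphism of the matrix algebra, hence inner by Skolem–Noether: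
`a* = s aᵀ s⁻¹`. Applying `*` twice shows that `s (sᵀ)⁻¹` commutes with every matrix, so it is a
scalar `μ`, i.e. `sᵀ = μ s`; transposing once more gives `s = μ² s`, so `μ = ±1`.
-/

open Matrix

namespace Matrix

variable {K n : Type*} [Field K]

theorem eq_one_or_eq_neg_one_of_transpose_eq_smul {s : Matrix n n K} {μ : K} (hs : s ≠ 0)
    (h : sᵀ = μ • s) : μ = 1 ∨ μ = -1 := by
  have : (μ * μ) • s = (1 : K) • s := by
    rw [mul_smul, ← h, ← transpose_smul, ← h, transpose_transpose, one_smul]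
  exact mul_self_eq_one_iff.mp (smul_left_injective K hs this)

variable [Fintype n] [DecidableEq n]

theorem exists_isUnit_algEquiv_apply_eq_mul_mul_inv (f : Matrix n n K ≃ₐ[K] Matrix n n K) :
    ∃ s : Matrix n n K, IsUnit s ∧ ∀ a, f a = s * a * s⁻¹ := by
  obtain ⟨T, hT⟩ :=
    (toLinAlgEquiv'.symm.trans (f.trans toLinAlgEquiv') : _ ≃ₐ[K] _).eq_linearEquivConjAlgEquiv
  set s := LinearMap.toMatrixAlgEquiv' (T : (n → K) →ₗ[K] n → K)
  have hs : s * LinearMap.toMatrixAlgEquiv' (T.symm : (n → K) →ₗ[K] n → K) = 1 := by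
    rw [← map_mul, ← map_one LinearMap.toMatrixAlgEquiv', Module.End.mul_eq_comp,
      LinearEquiv.comp_coe, LinearEquiv.symm_trans_self, LinearEquiv.refl_toLinearMap,
      Module.End.one_eq_id]
  refine ⟨s, IsUnit.of_mul_eq_one _ hs, fun a => ?_⟩
  have := congrArg (fun g => LinearMap.toMatrixAlgEquiv' (g (toLinAlgEquiv' a))) hT
  simpa [s, inv_eq_right_inv hs, LinearEquiv.conjAlgEquiv_apply, ← Module.End.mul_eq_comp,
    Matrix.mul_assoc] using this

theorem exists_isUnit_apply_eq_mul_transpose_mul_inv {st : Matrix n n K → Matrix n n K}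
    (hlin : IsLinearMap K st) (hanti : ∀ a b, st (a * b) = st b * st a)
    (hbij : Function.Bijective st) :
    ∃ s : Matrix n n K, IsUnit s ∧ ∀ a, st a = s * aᵀ * s⁻¹ := by
  have hone : st 1 = 1 := by
    obtain ⟨c, hc⟩ := hbij.2 1
    calc st 1 = st 1 * st c := by rw [hc, mul_one]
      _ = st (c * 1) := (hanti c 1).symm
      _ = 1 := by rw [mul_one, hc]
  let φ : Matrix n n K ≃ₐ[K] Matrix n n K :=
    .ofLinearEquiv ((transposeLinearEquiv n n K K).trans (.ofBijective (hlin.mk' st) hbij))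
      (show st 1ᵀ = 1 by rw [transpose_one, hone])
      (fun a b => show st (a * b)ᵀ = st aᵀ * st bᵀ by rw [transpose_mul, hanti])
  obtain ⟨s, hs, hφ⟩ := exists_isUnit_algEquiv_apply_eq_mul_mul_inv φ
  -- `φ aᵀ` unfolds to `st aᵀᵀ`, and `aᵀᵀ` is definitionally `a`
  exact ⟨s, hs, fun a => hφ aᵀ⟩

theorem exists_transpose_eq_smul_of_involutive {s : Matrix n n K} (hs : IsUnit s)
    (h : Function.Involutive fun a => s * aᵀ * s⁻¹) : ∃ μ : K, sᵀ = μ • s := by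
  have hdet : IsUnit s.det := (isUnit_iff_isUnit_det s).mp hs
  have hdetT : IsUnit sᵀ.det := by rwa [det_transpose]
  set c := s * sᵀ⁻¹ with hc_def
  have hc : c ∈ Set.center (Matrix n n K) := by
    rw [Semigroup.mem_center_iff]
    intro a
    have ha : c * a * sᵀ * s⁻¹ = a := by
      simpa [c, transpose_nonsing_inv, Matrix.mul_assoc] using h a
    calc a * c = c * a * sᵀ * s⁻¹ * c := by rw [ha]
      _ = c * a := by
        simp only [c, Matrix.mul_assoc, nonsing_inv_mul_cancel_left _ _ hdet,
          mul_nonsing_inv _ hdetT, Matrix.mul_one]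
  obtain ⟨μ, hμ⟩ : c ∈ Set.range (scalar n) := center_eq_range (n := n) (R := K) ▸ hc
  rw [scalar_apply, ← smul_one_eq_diagonal] at hμ
  have hsμ : s = μ • sᵀ := by
    rw [← smul_one_mul, hμ, hc_def, nonsing_inv_mul_cancel_right _ _ hdetT]
  exact ⟨μ, by simpa using congrArg transpose hsμ⟩

end Matrix

/-- Every ℂ-linear involution `*` of `Mₙ(ℂ)` is of the form `a* = s·aᵀ·s⁻¹` for
some invertible `s` with `sᵀ = μ·s`, `μ ∈ {1, -1}`. -/
theorem statement4 (n : ℕ) (hn : 1 ≤ n)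
    (st : Matrix (Fin n) (Fin n) ℂ → Matrix (Fin n) (Fin n) ℂ)
    (hlin : IsLinearMap ℂ st)
    (hanti : ∀ a b, st (a * b) = st b * st a)
    (hinvol : ∀ a, st (st a) = a) :
    ∃ s : Matrix (Fin n) (Fin n) ℂ, IsUnit s ∧
      ∃ μ : ℂ, (μ = 1 ∨ μ = -1) ∧ s.transpose = μ • s ∧
        ∀ a, st a = s * a.transpose * s⁻¹ := by
  have : Nonempty (Fin n) := ⟨⟨0, hn⟩⟩
  obtain ⟨s, hs, hst⟩ :=
    exists_isUnit_apply_eq_mul_transpose_mul_inv hlin hanti (Function.Involutive.bijective hinvol)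
  obtain ⟨μ, hμ⟩ := exists_transpose_eq_smul_of_involutive hs (funext hst ▸ hinvol)
  exact ⟨s, hs, μ, eq_one_or_eq_neg_one_of_transpose_eq_smul hs.ne_zero hμ, hμ, hst⟩
end

section
/- Let n ≥ 1 and let * : M_n(ℍ) → M_n(ℍ) be an ℝ-linear involution on the ℝ-algebra of n×n quaternionic matrices, i.e. an ℝ-linear map satisfying (a·b)* = b*·a* for all a,b and (a*)* = a for all a. Then there exist an invertible s ∈ M_n(ℍ) and μ ∈ {1, −1} such that s‡ = μ·s and a* = s·a‡·s⁻¹ for all a ∈ M_n(ℍ), where a‡ denotes the quaternionic conjugate transpose, (a‡)_{ij} = conj(a_{ji}). -/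
/-!
For an involution `*`, the map `a ↦ (a*)‡` is an `ℝ`-algebra endomorphism of `Mₙ(ℍ)`, and every
such endomorphism is inner (Skolem–Noether). Its values on the matrix units form a system of
matrix units, which is conjugate to the standard one; this reduces the question to `ℝ`-algebra
endomorphisms of `ℍ`, and those are inner because two anticommuting square roots of `-1` can be
moved to `i` and `j` by successive conjugations. Hence `a* = t a‡ t⁻¹`, and applying `*` twice
shows that `t (t‡)⁻¹` is central, i.e. a real scalar `μ`; then `t‡ = μ t` and `μ² = 1`.
-/

open Quaternion Matrix

section Ring
variable {A : Type*} [Ring A]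

theorem mul_sub_mul_mul_eq_of_mul_self_eq_neg_one {a x : A} (ha : a * a = -1) (hx : x * x = -1)
    (z : A) : a * (z - a * z * x) = (z - a * z * x) * x := by
  simp only [mul_sub, sub_mul, ← mul_assoc, ha]
  rw [mul_assoc _ x x, hx]
  noncomm_ring

theorem exists_ne_zero_mul_eq_mul_of_mul_self_eq_neg_one [NoZeroDivisors A] [CharZero A]
    {a x y : A} (ha : a * a = -1) (hx : x * x = -1) (hy : y ≠ 0) (hyx : y * x = -(x * y)) :
    ∃ w ≠ 0, a * w = w * x ∧ (y * a = -(a * y) → y * w = w * y) := by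
  -- `z - a * z * x` vanishes for both `z = 1` and `z = y` only if `a = -x`, but then it is `2 * y`
  -- at `z = y`.
  obtain ⟨z, hz, hw⟩ : ∃ z ∈ ({1, y} : Set A), z - a * z * x ≠ 0 := by
    by_contra! h
    have hax : a * x = 1 := by simpa using (sub_eq_zero.mp (h 1 (by simp))).symm
    have ha : a = -x := by
      have := congrArg (· * x) hax
      simp only [mul_assoc, hx, one_mul, mul_neg_one] at this
      exact neg_eq_iff_eq_neg.mp this
    have := h y (by simp)
    rw [ha, neg_mul, neg_mul, sub_neg_eq_add, mul_assoc, hyx, mul_neg, ← mul_assoc, hx,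
      neg_one_mul, neg_neg] at this
    exact hy (by simpa using this)
  refine ⟨_, hw, mul_sub_mul_mul_eq_of_mul_self_eq_neg_one ha hx z, fun hya => ?_⟩
  have hyz : y * z = z * y := by rcases hz with rfl | rfl <;> simp
  have hyazx : y * (a * z * x) = a * z * x * y :=
    calc y * (a * z * x) = -(a * (y * z) * x) := by
          rw [← mul_assoc, ← mul_assoc, hya]; noncomm_ring
      _ = -(a * z * (y * x)) := by rw [hyz]; noncomm_ring
      _ = a * z * x * y := by rw [hyx]; noncomm_ring
  rw [mul_sub, sub_mul, hyz, hyazx]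

end Ring

namespace Quaternion
open QuaternionAlgebra (Basis)

instance {R : Type*} [CommRing R] [CharZero R] : CharZero ℍ[R] :=
  charZero_of_injective_algebraMap coe_injective

instance {R : Type*} [CommRing R] [StarRing R] [TrivialStar R] : StarModule R ℍ[R] :=
  ⟨fun r a => by rw [star_trivial r]; exact Quaternion.star_smul r a⟩

theorem eq_coe_re_of_mem_center {R : Type*} [CommRing R] [NoZeroDivisors R] [CharZero R]
    {c : ℍ[R]} (hc : c ∈ Set.center ℍ[R]) : c = c.re := by
  rw [Semigroup.mem_center_iff] at hc
  set i : ℍ[R] := (Basis.self R : Basis ℍ[R] _ _ _).i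
  set j : ℍ[R] := (Basis.self R : Basis ℍ[R] _ _ _).j
  have hci := hc i
  have hcj := hc j
  rw [Quaternion.ext_iff] at hci hcj
  simp only [re_mul, imI_mul, imJ_mul, imK_mul] at hci hcj
  simp [i, j] at hci hcj
  ext <;> simp
  · exact self_eq_neg.mp hcj.2.symm
  · exact self_eq_neg.mp hci.2
  · exact self_eq_neg.mp hcj.1

variable {R : Type*} [Field R] [LinearOrder R] [IsStrictOrderedRing R]

theorem exists_units_algHom_apply_eq_of_map_i (τ : ℍ[R] →ₐ[R] ℍ[R])
    (hτ : τ (Basis.self R).i = (Basis.self R).i) :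
    ∃ w : ℍ[R]ˣ, ∀ q, τ q = w * q * (↑w⁻¹ : ℍ[R]) := by
  set i : ℍ[R] := (Basis.self R : Basis ℍ[R] _ _ _).i
  set j : ℍ[R] := (Basis.self R : Basis ℍ[R] _ _ _).j
  have hj : j * j = -1 := by
    ext <;> simp only [re_mul, imI_mul, imJ_mul, imK_mul] <;> simp [j]
  have hij : i * j = -(j * i) := by
    ext <;> simp only [re_mul, imI_mul, imJ_mul, imK_mul, re_neg, imI_neg, imJ_neg, imK_neg] <;>
      simp [i, j]
  have hi0 : i ≠ 0 := fun h => by simpa [i] using congrArg (·.imI) h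
  have hτj : τ j * τ j = -1 := by rw [← map_mul, hj, map_neg, map_one]
  have hiτj : i * τ j = -(τ j * i) := by
    rw [← hτ, ← map_mul, ← map_mul, ← map_neg, hij]
  obtain ⟨w, hw, hwj, hwi⟩ := exists_ne_zero_mul_eq_mul_of_mul_self_eq_neg_one hτj hj hi0 hij
  suffices τ = MulSemiringAction.toAlgHom R ℍ[R] (ConjAct.toConjAct (Units.mk0 w hw)) from
    ⟨Units.mk0 w hw, fun q => by rw [this]; exact ConjAct.units_smul_def _ _⟩
  refine Quaternion.hom_ext ?_ ?_
  · change τ i = w * i * w⁻¹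
    rw [hτ, ← hwi hiτj, mul_inv_cancel_right₀ hw]
  · change τ j = w * j * w⁻¹
    rw [eq_mul_inv_iff_mul_eq₀ hw, hwj]

theorem exists_units_algHom_apply_eq (σ : ℍ[R] →ₐ[R] ℍ[R]) :
    ∃ w : ℍ[R]ˣ, ∀ q, σ q = w * q * (↑w⁻¹ : ℍ[R]) := by
  set i : ℍ[R] := (Basis.self R : Basis ℍ[R] _ _ _).i
  set j : ℍ[R] := (Basis.self R : Basis ℍ[R] _ _ _).j
  have hi : i * i = -1 := by
    ext <;> simp only [re_mul, imI_mul, imJ_mul, imK_mul] <;> simp [i]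
  have hji : j * i = -(i * j) := by
    ext <;> simp only [re_mul, imI_mul, imJ_mul, imK_mul, re_neg, imI_neg, imJ_neg, imK_neg] <;>
      simp [i, j]
  have hj0 : j ≠ 0 := fun h => by simpa [j] using congrArg (·.imJ) h
  have hσi : σ i * σ i = -1 := by rw [← map_mul, hi, map_neg, map_one]
  obtain ⟨w, hw, hwi, -⟩ := exists_ne_zero_mul_eq_mul_of_mul_self_eq_neg_one hσi hi hj0 hji
  set u := Units.mk0 w hw
  set τ := (MulSemiringAction.toAlgHom R ℍ[R] (ConjAct.toConjAct u⁻¹)).comp σ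
  have hτ : ∀ q, τ q = w⁻¹ * σ q * w := fun q => by simp [τ, u, ConjAct.units_smul_def]
  obtain ⟨v, hv⟩ := exists_units_algHom_apply_eq_of_map_i τ
    (show τ i = i by rw [hτ, mul_assoc, hwi, inv_mul_cancel_left₀ hw])
  refine ⟨u * v, fun q => ?_⟩
  have hσ : σ q = w * τ q * w⁻¹ := by rw [hτ]; simp [mul_assoc, hw]
  rw [hσ, hv]
  simp [u, mul_assoc]

end Quaternion

namespace Matrix

theorem single_one_mul_single_one {ι α : Type*} [Fintype ι] [DecidableEq ι] [Semiring α]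
    (i j k l : ι) :
    single i j (1 : α) * single k l 1 = if j = k then single i l 1 else 0 := by
  split_ifs with h
  · rw [h, single_mul_single_same, mul_one]
  · exact single_mul_single_of_ne (h := h) ..

theorem _root_.AlgHom.exists_eq_mapMatrix_of_map_single {ι K D : Type*} [Fintype ι]
    [DecidableEq ι] [Nonempty ι] [CommSemiring K] [Semiring D] [Algebra K D]
    (φ : Matrix ι ι D →ₐ[K] Matrix ι ι D) (hφ : ∀ i j, φ (single i j 1) = single i j 1) :
    ∃ σ : D →ₐ[K] D, φ = σ.mapMatrix := by
  obtain ⟨z⟩ := ‹Nonempty ι›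
  set σ : D → D := fun q => φ (single z z q) z z
  have hsingle : ∀ i j q, φ (single i j q) = single i j (σ q) := fun i j q => by
    rw [show single i j q = single i z 1 * single z z q * single z j 1 by simp, map_mul, map_mul,
      hφ, hφ, single_mul_mul_single, one_mul, mul_one]
  let σ' : D →ₐ[K] D :=
    { toFun := σ
      map_one' := by simp [σ, hφ]
      map_mul' := fun p q => by
        simp only [σ]
        rw [← single_mul_single_same (c := p) z z z q, map_mul, hsingle, hsingle,
          single_mul_single_same]
        simp only [single_apply_same]
      map_zero' := by simp [σ]
      map_add' := fun p q => by simp [σ, single_add]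
      commutes' := fun r => by
        simp only [σ]
        rw [Algebra.algebraMap_eq_smul_one, ← smul_single, map_smul, hφ, smul_apply,
          single_apply_same] }
  refine ⟨σ', AlgHom.ext fun a => ?_⟩
  induction a using Matrix.induction_on' with
  | h_zero => simp
  | h_add a b ha hb => rw [map_add, map_add, ha, hb]
  | h_std_basis i j q => exact (hsingle i j q).trans (map_single i j q σ').symm

theorem exists_eq_algebraMap_of_mem_center_quaternion {ι R : Type*} [Fintype ι]
    [DecidableEq ι] [CommRing R] [NoZeroDivisors R] [CharZero R] {p : Matrix ι ι ℍ[R]}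
    (hp : p ∈ Set.center (Matrix ι ι ℍ[R])) : ∃ μ : R, p = algebraMap R _ μ := by
  rw [center_eq_scalar_image] at hp
  obtain ⟨c, hc, rfl⟩ := hp
  refine ⟨c.re, ?_⟩
  rw [Quaternion.eq_coe_re_of_mem_center hc, algebraMap_eq_diagonal]
  rfl

variable {ι D : Type*} [Fintype ι] [DecidableEq ι] [Nonempty ι] [DivisionRing D]

theorem exists_units_mul_eq_mul_single (f : ι → ι → Matrix ι ι D)
    (hf : ∀ i j k l, f i j * f k l = if j = k then f i l else 0) (hsum : ∑ i, f i i = 1) :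
    ∃ u : (Matrix ι ι D)ˣ, ∀ i j, f i j * u = u * single i j (1 : D) := by
  obtain ⟨z⟩ := ‹Nonempty ι›
  have hzz : f z z ≠ 0 := by
    intro h
    have : ∀ i, f i i = 0 := fun i => by
      rw [show f i i = f i z * f z z * f z i by simp [hf], h, mul_zero, zero_mul]
    simp [this] at hsum
  obtain ⟨r, c, hrc⟩ : ∃ r c, f z z r c ≠ 0 := by
    by_contra! h
    exact hzz (ext h)
  -- the `k`-th column of `u` is the `c`-th column of `f k z`, the `k`-th row of `u'` the `r`-th
  -- row of `f z k`
  set u := ∑ k, f k z * single c k 1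
  set u' := ∑ k, single k r 1 * f z k
  have hu : ∀ i j, f i j * u = u * single i j 1 := by
    intro i j
    calc f i j * u = f i z * single c j 1 := by simp [u, Finset.mul_sum, ← mul_assoc, hf]
      _ = u * single i j 1 := by
        simp [u, Finset.sum_mul, mul_assoc, single_one_mul_single_one]
  have hu'u : u' * u = scalar ι (f z z r c) := by
    simp [u, u', Finset.sum_mul_sum, mul_assoc, ← mul_assoc (f z _), hf]
    simp [← mul_assoc, sum_single_eq_diagonal]
  have hinv : (scalar ι (f z z r c)⁻¹ * u') * u = 1 := by
    rw [mul_assoc, hu'u, ← map_mul, inv_mul_cancel₀ hrc, map_one]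
  exact ⟨⟨u, _, mul_eq_one_comm.mp hinv, hinv⟩, hu⟩

theorem exists_units_algHom_apply_eq {K : Type*} [CommSemiring K] [Algebra K D]
    (ψ : Matrix ι ι D →ₐ[K] Matrix ι ι D) :
    ∃ (u : (Matrix ι ι D)ˣ) (σ : D →ₐ[K] D),
      ∀ a, ψ a = u * σ.mapMatrix a * (↑u⁻¹ : Matrix ι ι D) := by
  obtain ⟨u, hu⟩ := exists_units_mul_eq_mul_single (fun i j => ψ (single i j 1))
    (fun i j k l => by rw [← map_mul, single_one_mul_single_one]; split_ifs <;> simp)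
    (by rw [← map_sum, sum_single_one, map_one])
  set κ := MulSemiringAction.toAlgEquiv K (Matrix ι ι D) (ConjAct.toConjAct u)
  have hκ : ∀ a, κ a = u * a * (↑u⁻¹ : Matrix ι ι D) := fun a => by
    simp [κ, ConjAct.units_smul_def]
  obtain ⟨σ, hσ⟩ := (κ.symm.toAlgHom.comp ψ).exists_eq_mapMatrix_of_map_single fun i j => by
    rw [AlgHom.comp_apply, AlgEquiv.coe_toAlgHom, AlgEquiv.symm_apply_eq, hκ, ← hu,
      Units.mul_inv_cancel_right]
  refine ⟨u, σ, fun a => ?_⟩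
  rw [← hκ, ← hσ]
  simp

theorem exists_units_quaternion_algHom_apply_eq {R : Type*} [Field R] [LinearOrder R]
    [IsStrictOrderedRing R] (ψ : Matrix ι ι ℍ[R] →ₐ[R] Matrix ι ι ℍ[R]) :
    ∃ s : (Matrix ι ι ℍ[R])ˣ, ∀ a : Matrix ι ι ℍ[R], ψ a = s * a * (↑s⁻¹ : Matrix ι ι ℍ[R]) := by
  obtain ⟨u, σ, hψ⟩ := exists_units_algHom_apply_eq ψ
  obtain ⟨w, hw⟩ := Quaternion.exists_units_algHom_apply_eq σ
  let W := Units.map (scalar ι : ℍ[R] →+* Matrix ι ι ℍ[R]).toMonoidHom w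
  have hσ : ∀ a : Matrix ι ι ℍ[R], σ.mapMatrix a = W * a * (↑W⁻¹ : Matrix ι ι ℍ[R]) :=
    fun a => by
      ext i j : 1
      simp [W, hw, scalar_apply]
  refine ⟨u * W, fun a => ?_⟩
  rw [hψ, hσ]
  simp [mul_assoc]

end Matrix

theorem exists_algHom_apply_eq_star_of_antiInvolution {R A : Type*} [CommSemiring R]
    [StarRing R] [TrivialStar R] [Semiring A] [StarRing A] [Algebra R A] [StarModule R A]
    (st : A → A) (hlin : IsLinearMap R st) (hanti : ∀ a b, st (a * b) = st b * st a)
    (hinvol : ∀ a, st (st a) = a) :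
    ∃ ψ : A →ₐ[R] A, ∀ a, ψ a = star (st a) := by
  have hone : st 1 = 1 := by simpa [hinvol] using (hanti (st 1) 1).symm
  refine ⟨
    { toFun := fun a => star (st a)
      map_one' := by simp [hone]
      map_mul' := fun a b => by simp [hanti]
      map_zero' := by simp [hlin.map_zero]
      map_add' := fun a b => by simp [hlin.map_add]
      commutes' := fun r => by simp [Algebra.algebraMap_eq_smul_one, hlin.map_smul, hone] },
    fun a => rfl⟩

namespace Units

theorem mul_star_inv_mem_center {A : Type*} [Ring A] [StarRing A] (t : Aˣ)
    (h : ∀ a : A, t * star (t * star a * ↑t⁻¹) * ↑t⁻¹ = a) :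
    (t : A) * star (↑t⁻¹ : A) ∈ Set.center A := by
  rw [Semigroup.mem_center_iff]
  intro a
  have hinv : star (t : A) * ↑t⁻¹ * (t * star (↑t⁻¹ : A)) = 1 := by
    rw [mul_assoc, ← mul_assoc (↑t⁻¹ : A), t.inv_mul, one_mul, ← star_mul, t.inv_mul, star_one]
  calc a * (t * star (↑t⁻¹ : A))
      = t * star (t * star a * ↑t⁻¹) * ↑t⁻¹ * (t * star (↑t⁻¹ : A)) := by rw [h]
    _ = t * star (↑t⁻¹ : A) * a * (star (t : A) * ↑t⁻¹ * (t * star (↑t⁻¹ : A))) := by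
      simp only [star_mul, star_star, mul_assoc]
    _ = t * star (↑t⁻¹ : A) * a := by rw [hinv, mul_one]

theorem star_eq_smul_of_mul_star_inv_eq_algebraMap {R A : Type*} [Field R] [StarRing R]
    [TrivialStar R] [Ring A] [StarRing A] [Nontrivial A] [Algebra R A] [StarModule R A]
    (t : Aˣ) {μ : R} (h : t * star (↑t⁻¹ : A) = algebraMap R A μ) :
    star (t : A) = μ • t ∧ (μ = 1 ∨ μ = -1) := by
  have ht : (t : A) = μ • star (t : A) :=
    calc (t : A) = t * star (↑t⁻¹ : A) * star (t : A) := by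
          rw [mul_assoc, ← star_mul, t.mul_inv, star_one, mul_one]
      _ = μ • star (t : A) := by rw [h, Algebra.smul_def]
  have hstar : star (t : A) = μ • t := by
    conv_lhs => rw [ht]
    rw [StarModule.star_smul, star_star, star_trivial]
  refine ⟨hstar, mul_self_eq_one_iff.mp ?_⟩
  have h0 : (μ * μ - 1) • (t : A) = 0 := by
    rw [sub_smul, mul_smul, ← hstar, ← ht, one_smul, sub_self]
  rcases smul_eq_zero.mp h0 with h | h
  · exact sub_eq_zero.mp h
  · exact absurd h t.ne_zero

end Units

/-- Every ℝ-linear involution `*` of `Mₙ(ℍ)` is of the form `a* = s·a‡·s⁻¹` for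
some invertible `s` with `s‡ = μ·s`, `μ ∈ {1, -1}`, where `‡` is the quaternionic conjugate
transpose. (Invertibility of `s` is expressed via a two-sided inverse `s'`.) -/
theorem statement5 (n : ℕ) (hn : 1 ≤ n)
    (st : Matrix (Fin n) (Fin n) (Quaternion ℝ) → Matrix (Fin n) (Fin n) (Quaternion ℝ))
    (hlin : IsLinearMap ℝ st)
    (hanti : ∀ a b, st (a * b) = st b * st a)
    (hinvol : ∀ a, st (st a) = a) :
    ∃ s s' : Matrix (Fin n) (Fin n) (Quaternion ℝ), s * s' = 1 ∧ s' * s = 1 ∧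
      ∃ μ : ℝ, (μ = 1 ∨ μ = -1) ∧ s.conjTranspose = μ • s ∧
        ∀ a, st a = s * a.conjTranspose * s' := by
  have : Nonempty (Fin n) := ⟨⟨0, hn⟩⟩
  obtain ⟨ψ, hψ⟩ := exists_algHom_apply_eq_star_of_antiInvolution st hlin hanti hinvol
  obtain ⟨s, hs⟩ := exists_units_quaternion_algHom_apply_eq ψ
  set t := (star s)⁻¹
  have hst : ∀ a, st a = t * star a * (↑t⁻¹ : Matrix (Fin n) (Fin n) ℍ[ℝ]) := fun a => by
    rw [← star_star (st a), ← hψ, hs]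
    simp [t, mul_assoc]
  obtain ⟨μ, hμ⟩ := exists_eq_algebraMap_of_mem_center_quaternion
    (t.mul_star_inv_mem_center fun a => by rw [← hst, ← hst, hinvol])
  obtain ⟨hsym, hμ1⟩ := t.star_eq_smul_of_mul_star_inv_eq_algebraMap hμ
  refine ⟨t, ↑t⁻¹, t.mul_inv, t.inv_mul, μ, hμ1, ?_, fun a => ?_⟩
  · rwa [← star_eq_conjTranspose]
  · rw [hst, star_eq_conjTranspose]
end

section
/- Let n ≥ 1 and let * : M_n(ℂ) → M_n(ℂ) be an ℝ-linear involution of M_n(ℂ) regarded as an ℝ-algebra, i.e. an ℝ-linear map satisfying (a·b)* = b*·a* for all a,b and (a*)* = a for all a. Then either (1) there exist an invertible s ∈ M_n(ℂ) and μ ∈ {1, −1} such that sᵀ = μ·s and a* = s·aᵀ·s⁻¹ for all a, or (2) there exist an invertible s ∈ M_n(ℂ) and μ ∈ ℂ with |μ| = 1 such that s† = μ·s and a* = s·a†·s⁻¹ for all a, where a† denotes the conjugate transpose of a. -/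
/-!
An ℝ-linear anti-automorphism `*` of `Mₙ(ℂ)` preserves the centre `ℂ • 1`, on which it acts by an
ℝ-algebra automorphism `σ` of `ℂ`; hence `σ` is the identity or complex conjugation and `*` is
`σ`-semilinear. Let `τ` be the transpose in the first case and the conjugate transpose in the
second: `τ` is a `σ`-semilinear involution too, so `* ∘ τ` is a `ℂ`-algebra automorphism, which by
Skolem–Noether is conjugation by some invertible `s`, i.e. `a* = s τ(a) s⁻¹`. Now `a** = a` says
that `τ(s) s⁻¹` is central, so `τ(s) = μ s`, and applying `τ` once more gives `σ(μ) μ = 1`.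
-/

open Matrix

theorem Function.Involutive.map_one_of_map_mul_rev {M : Type*} [MulOneClass M] {f : M → M}
    (hf : Function.Involutive f) (hmul : ∀ a b, f (a * b) = f b * f a) : f 1 = 1 := by
  simpa [hf 1] using (hmul (f 1) 1).symm

theorem Function.Surjective.map_mem_center_of_map_mul_rev {M : Type*} [Semigroup M] {f : M → M}
    (hf : Function.Surjective f) (hmul : ∀ a b, f (a * b) = f b * f a) {z : M}
    (hz : z ∈ Set.center M) : f z ∈ Set.center M := by
  refine Semigroup.mem_center_iff.mpr fun g => ?_
  obtain ⟨a, rfl⟩ := hf g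
  rw [← hmul, ← hmul, Semigroup.mem_center_iff.mp hz]

variable {ι K : Type*} [Fintype ι] [Field K]

structure Matrix.IsSemilinearInvolution (σ : K →+* K) (f : Matrix ι ι K → Matrix ι ι K) :
    Prop where
  map_add : ∀ a b, f (a + b) = f a + f b
  map_smul : ∀ (z : K) a, f (z • a) = σ z • f a
  map_mul : ∀ a b, f (a * b) = f b * f a
  involutive : Function.Involutive f

theorem Matrix.isSemilinearInvolution_transpose :
    IsSemilinearInvolution (RingHom.id K) (transpose : Matrix ι ι K → Matrix ι ι K) :=
  ⟨transpose_add, transpose_smul, transpose_mul, transpose_transpose⟩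

theorem Matrix.isSemilinearInvolution_conjTranspose [StarRing K] :
    IsSemilinearInvolution (starRingEnd K) (conjTranspose : Matrix ι ι K → Matrix ι ι K) :=
  ⟨conjTranspose_add, conjTranspose_smul, conjTranspose_mul, conjTranspose_conjTranspose⟩

variable [DecidableEq ι]

theorem Matrix.exists_isUnit_forall_algEquiv_apply_eq (f : Matrix ι ι K ≃ₐ[K] Matrix ι ι K) :
    ∃ s : Matrix ι ι K, IsUnit s ∧ ∀ a, f a = s * a * s⁻¹ := by
  obtain ⟨T, hT⟩ :=
    ((toLinAlgEquiv'.symm.trans f).trans toLinAlgEquiv').eq_linearEquivConjAlgEquiv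
  set s := LinearMap.toMatrixAlgEquiv' (T : Module.End K (ι → K))
  have hs_mul : s * LinearMap.toMatrixAlgEquiv' T.symm.toLinearMap = 1 := by
    rw [← map_mul, Module.End.mul_eq_comp, T.comp_symm, ← Module.End.one_eq_id, map_one]
  refine ⟨s, IsUnit.of_mul_eq_one _ hs_mul, fun a => ?_⟩
  have := congr(LinearMap.toMatrixAlgEquiv' ($hT (toLinAlgEquiv' a)))
  simpa [LinearEquiv.conjAlgEquiv_apply, ← Module.End.mul_eq_comp, inv_eq_right_inv hs_mul, s,
    mul_assoc] using this

namespace Matrix.IsSemilinearInvolution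

variable {σ : K →+* K} {f τ : Matrix ι ι K → Matrix ι ι K}

theorem map_one (hf : IsSemilinearInvolution σ f) : f 1 = 1 :=
  hf.involutive.map_one_of_map_mul_rev hf.map_mul

theorem ringHom_apply_apply_smul_one (hf : IsSemilinearInvolution σ f) (z : K) :
    σ (σ z) • (1 : Matrix ι ι K) = z • 1 := by
  simpa [hf.map_smul, hf.map_one] using hf.involutive (z • 1)

def compAlgEquiv (hf : IsSemilinearInvolution σ f) (hτ : IsSemilinearInvolution σ τ) :
    Matrix ι ι K ≃ₐ[K] Matrix ι ι K where
  toFun := f ∘ τ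
  invFun := τ ∘ f
  left_inv a := by simp [hf.involutive _, hτ.involutive _]
  right_inv a := by simp [hf.involutive _, hτ.involutive _]
  map_mul' a b := by simp [hf.map_mul, hτ.map_mul]
  map_add' a b := by simp [hf.map_add, hτ.map_add]
  commutes' z := by
    simp [Algebra.algebraMap_eq_smul_one, hτ.map_smul, hf.map_smul, hf.map_one, hτ.map_one,
      hf.ringHom_apply_apply_smul_one]

theorem exists_isUnit_forall_eq (hf : IsSemilinearInvolution σ f)
    (hτ : IsSemilinearInvolution σ τ) : ∃ s, IsUnit s ∧ ∀ a, f a = s * τ a * s⁻¹ := by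
  obtain ⟨s, hs, hfs⟩ := exists_isUnit_forall_algEquiv_apply_eq (hf.compAlgEquiv hτ)
  exact ⟨s, hs, fun a => by simpa [compAlgEquiv, hτ.involutive a] using hfs (τ a)⟩

theorem exists_apply_eq_smul (hτ : IsSemilinearInvolution σ τ) (hf : Function.Involutive f)
    {s : Matrix ι ι K} (hs : IsUnit s) (hfs : ∀ a, f a = s * τ a * s⁻¹) :
    ∃ μ : K, τ s = μ • s := by
  have hss : s⁻¹ * s = 1 := nonsing_inv_mul s ((isUnit_iff_isUnit_det s).mp hs)
  have hcentral : τ s * s⁻¹ ∈ Set.center (Matrix ι ι K) := by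
    refine Semigroup.mem_center_iff.mpr fun a => ?_
    -- `f (f a) = (τ s * s⁻¹)⁻¹ * a * (τ s * s⁻¹)`
    calc a * (τ s * s⁻¹) = τ s * (s⁻¹ * s) * τ (s⁻¹) * τ (τ a) * τ s * s⁻¹ := by
          rw [hss, mul_one, ← hτ.map_mul, hss, hτ.map_one, one_mul, hτ.involutive, mul_assoc]
      _ = τ s * s⁻¹ * f (f a) := by
          rw [hfs (f a), hfs a, hτ.map_mul, hτ.map_mul]
          simp only [mul_assoc]
      _ = τ s * s⁻¹ * a := by rw [hf a]
  rw [center_eq_range] at hcentral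
  obtain ⟨μ, hμ⟩ := hcentral
  refine ⟨μ, ?_⟩
  rw [← mul_one (τ s), ← hss, ← mul_assoc, ← hμ, scalar_apply, ← smul_one_eq_diagonal,
    smul_mul_assoc, one_mul]

theorem ringHom_apply_mul_self_eq_one [Nonempty ι] (hτ : IsSemilinearInvolution σ τ)
    {s : Matrix ι ι K} (hs : IsUnit s) {μ : K} (hμ : τ s = μ • s) : σ μ * μ = 1 := by
  refine smul_left_injective K hs.ne_zero ?_
  simp only
  rw [one_smul, mul_smul, ← hμ, ← hτ.map_smul, ← hμ, hτ.involutive]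

theorem exists_eq_mul_mul_inv [Nonempty ι] (hf : IsSemilinearInvolution σ f)
    (hτ : IsSemilinearInvolution σ τ) :
    ∃ s, IsUnit s ∧ ∃ μ : K, σ μ * μ = 1 ∧ τ s = μ • s ∧ ∀ a, f a = s * τ a * s⁻¹ := by
  obtain ⟨s, hs, hfs⟩ := hf.exists_isUnit_forall_eq hτ
  obtain ⟨μ, hμ⟩ := hτ.exists_apply_eq_smul hf.involutive hs hfs
  exact ⟨s, hs, μ, hτ.ringHom_apply_mul_self_eq_one hs hμ, hμ, hfs⟩

end Matrix.IsSemilinearInvolution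

theorem Matrix.exists_algHom_isSemilinearInvolution {k : Type*} [CommSemiring k] [Algebra k K]
    [Nonempty ι] {f : Matrix ι ι K → Matrix ι ι K} (hlin : IsLinearMap k f)
    (hmul : ∀ a b, f (a * b) = f b * f a) (hf : Function.Involutive f) :
    ∃ σ : K →ₐ[k] K, IsSemilinearInvolution (σ : K →+* K) f := by
  have hf1 : f 1 = 1 := hf.map_one_of_map_mul_rev hmul
  have hscalar (z : K) : ∃ w : K, f (z • 1) = w • 1 := by
    have := hf.surjective.map_mem_center_of_map_mul_rev hmul
      (Set.smul_mem_center z (Set.one_mem_center (M := Matrix ι ι K)))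
    rw [center_eq_range] at this
    obtain ⟨w, hw⟩ := this
    exact ⟨w, by rw [← hw, scalar_apply, smul_one_eq_diagonal]⟩
  choose c hc using hscalar
  have hinj := smul_left_injective K (one_ne_zero : (1 : Matrix ι ι K) ≠ 0)
  have hc_mul (x y : K) : c (x * y) = c x * c y := hinj <| by
    simp only
    rw [← hc, mul_comm x, ← smul_smul, ← smul_one_mul, hmul, hc, hc, smul_one_mul, smul_smul]
  let σ : K →ₐ[k] K :=
    { toFun := c
      map_one' := hinj <| by simp only; rw [← hc, one_smul, hf1]
      map_mul' := hc_mul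
      map_zero' := hinj <| by simp only; rw [← hc, zero_smul, hlin.map_zero]
      map_add' x y := hinj <| by simp only; rw [← hc, add_smul, add_smul, hlin.map_add, hc, hc]
      commutes' r := hinj <| by
        simp only; rw [← hc, algebraMap_smul, hlin.map_smul, hf1] }
  refine ⟨σ, hlin.map_add, fun z a => ?_, hmul, hf⟩
  change f (z • a) = c z • f a
  rw [← mul_one a, ← mul_smul_comm, hmul, hc, smul_one_mul, mul_one]

/-- Every ℝ-linear involution `*` of `Mₙ(ℂ)` (as an ℝ-algebra) is either of the
form `a* = s·aᵀ·s⁻¹` with `sᵀ = μ·s`, `μ ∈ {1, -1}`, or of the form `a* = s·a†·s⁻¹` with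
`s† = μ·s`, `|μ| = 1`. -/
theorem statement6 (n : ℕ) (hn : 1 ≤ n)
    (st : Matrix (Fin n) (Fin n) ℂ → Matrix (Fin n) (Fin n) ℂ)
    (hlin : IsLinearMap ℝ st)
    (hanti : ∀ a b, st (a * b) = st b * st a)
    (hinvol : ∀ a, st (st a) = a) :
    (∃ s : Matrix (Fin n) (Fin n) ℂ, IsUnit s ∧
      ∃ μ : ℂ, (μ = 1 ∨ μ = -1) ∧ s.transpose = μ • s ∧
        ∀ a, st a = s * a.transpose * s⁻¹) ∨
    (∃ s : Matrix (Fin n) (Fin n) ℂ, IsUnit s ∧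
      ∃ μ : ℂ, ‖μ‖ = 1 ∧ s.conjTranspose = μ • s ∧
        ∀ a, st a = s * a.conjTranspose * s⁻¹) := by
  have : Nonempty (Fin n) := ⟨⟨0, hn⟩⟩
  obtain ⟨σ, hσ⟩ := exists_algHom_isSemilinearInvolution hlin hanti hinvol
  rcases Complex.real_algHom_eq_id_or_conj σ with rfl | rfl
  · obtain ⟨s, hs, μ, hμ, hsμ, hst⟩ := hσ.exists_eq_mul_mul_inv isSemilinearInvolution_transpose
    exact .inl ⟨s, hs, μ, mul_self_eq_one_iff.mp hμ, hsμ, hst⟩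
  · obtain ⟨s, hs, μ, hμ, hsμ, hst⟩ :=
      hσ.exists_eq_mul_mul_inv isSemilinearInvolution_conjTranspose
    have hnorm : ‖μ‖ ^ 2 = 1 := by exact_mod_cast (Complex.conj_mul' μ).symm.trans hμ
    exact .inr ⟨s, hs, μ, (pow_eq_one_iff_of_nonneg (norm_nonneg μ) two_ne_zero).mp hnorm, hsμ,
      hst⟩
end

section
/- Let k be a field, A a finite-dimensional associative unital k-algebra, and ε : A → k a k-linear functional such that the bilinear form (x,y) ↦ ε(x·y) is nondegenerate and symmetric (ε(x·y) = ε(y·x) for all x,y). Fix a basis {e_a} of A and let (B^{ab}) be the inverse of the matrix (ε(e_a·e_b))_{a,b}; assume there is R ∈ k, R ≠ 0, with R·Σ_{a,b} B^{ab}·e_a·e_b = 1. Let * : A → A be a k-linear involution ((a·b)* = b*·a*, (a*)* = a) satisfying ε(a*) = ε(a) for all a. Define w := Σ_{a,b} B^{ab}·e_a·(e_b)* and z := Σ_{a,b,c,d} B^{ac}·B^{bd}·e_a·e_b·e_c·e_d. Then w lies in the center of A and w·z = w³. -/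
/-!
Let `f a = ∑ b, B a b • e b` be the basis dual to `e` for the pairing `ε(x * y)`. Moving a linear
map across the canonical element `∑ e_a ⊗ f_a` replaces it by its adjoint for `ε(v * u)`; this
gives `∑ x e_a ⊗ f_a = ∑ e_a ⊗ f_a x` and, when `ε` is symmetric and `*`-invariant, invariance
under `* ⊗ *`. Symmetry of `ε` also makes `∑ e_a ⊗ f_a` invariant under the flip.

For `W y = ∑ e_a y f_a*` these give `x W(y) = W(y x*)` and `W(y) x = W(x* y)`, so `w = W(1)` is
central, `w x* = W(x)` and `w* = w`. With the Casimir operator `C y = ∑ e_a y f_a`, whose values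
are central, `z = ∑ C(e_a) f_a` and `w² = ∑ C(e_a) f_a*`; hence
`z w = ∑ C(e_a) W(f_a*) = W(w²) = w (w²)* = w³`.
-/

open Finset Matrix

namespace SymmetricFrobenius

variable {k A : Type*} [Field k] [Ring A] [Algebra k A] {ι : Type*} [Fintype ι]

def gramMatrix (ε : A →ₗ[k] k) (e : ι → A) : Matrix ι ι k := Matrix.of fun a b => ε (e a * e b)

/-- With `B` the inverse of `gramMatrix ε e`, this is the basis dual to `e` under `ε(x * y)`. -/
def dualFamily (e : ι → A) (B : Matrix ι ι k) (a : ι) : A := ∑ b, B a b • e b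

def casimir (e : ι → A) (B : Matrix ι ι k) (y : A) : A := ∑ a, e a * y * dualFamily e B a

def twistedCasimir (e : ι → A) (B : Matrix ι ι k) (σ : A →ₗ[k] A) : A →ₗ[k] A :=
  ∑ a, LinearMap.mulLeftRight k (e a, σ (dualFamily e B a))

structure IsInvariantAntiInvolution (ε : A →ₗ[k] k) (σ : A →ₗ[k] A) : Prop where
  map_mul : ∀ x y, σ (x * y) = σ y * σ x
  map_map : ∀ x, σ (σ x) = x
  apply_map : ∀ x, ε (σ x) = ε x

lemma twistedCasimir_apply (e : ι → A) (B : Matrix ι ι k) (σ : A →ₗ[k] A) (y : A) :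
    twistedCasimir e B σ y = ∑ a, e a * y * σ (dualFamily e B a) := by
  simp [twistedCasimir, LinearMap.mulLeftRight_apply]

lemma sum_sum_smul_apply_eq_sum_apply_dualFamily {M : Type*} [AddCommGroup M] [Module k M]
    (e : ι → A) (B : Matrix ι ι k) (T : A →ₗ[k] A →ₗ[k] M) :
    ∑ a, ∑ b, B a b • T (e a) (e b) = ∑ a, T (e a) (dualFamily e B a) := by
  simp only [dualFamily, map_sum, map_smul]

lemma sum_sum_smul_mul_map_eq_twistedCasimir_one (e : ι → A) (B : Matrix ι ι k)
    (σ : A →ₗ[k] A) :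
    ∑ p, ∑ q, B p q • (e p * σ (e q)) = twistedCasimir e B σ 1 := by
  simpa [twistedCasimir_apply] using
    sum_sum_smul_apply_eq_sum_apply_dualFamily e B ((LinearMap.mul k A).compl₂ σ)

lemma sum_smul_mul_eq_sum_casimir_mul_dualFamily (e : ι → A) (B : Matrix ι ι k) :
    ∑ a, ∑ b, ∑ c, ∑ d, (B a c * B b d) • (e a * e b * e c * e d)
      = ∑ b, casimir e B (e b) * dualFamily e B b := by
  simp only [casimir, dualFamily, sum_mul, mul_sum, smul_mul_assoc, mul_smul_comm, smul_sum,
    smul_smul]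
  rw [sum_comm]
  refine sum_congr rfl fun b _ => ((sum_congr rfl fun a _ => sum_comm).trans sum_comm).trans ?_
  exact sum_congr rfl fun d _ => sum_congr rfl fun a _ => sum_congr rfl fun c _ => by
    rw [mul_comm]

lemma mul_twistedCasimir_of_forall_commute (e : ι → A) (B : Matrix ι ι k) (σ : A →ₗ[k] A)
    {c : A} (hc : ∀ x, c * x = x * c) (y : A) :
    c * twistedCasimir e B σ y = twistedCasimir e B σ (c * y) := by
  rw [twistedCasimir_apply, twistedCasimir_apply, mul_sum]
  exact sum_congr rfl fun a _ => by simp only [← mul_assoc, hc (e a)]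

variable (ε : A →ₗ[k] k) (e : Module.Basis ι k A) (B : Matrix ι ι k)

lemma apply_mul_basis_eq_vecMul_gramMatrix (y : A) (a : ι) :
    ε (y * e a) = (e.repr y ᵥ* gramMatrix ε e) a := by
  conv_lhs => rw [← e.sum_repr y]
  simp only [sum_mul, smul_mul_assoc, map_sum, map_smul, smul_eq_mul, vecMul, dotProduct,
    gramMatrix, of_apply]

lemma apply_basis_mul_eq_gramMatrix_mulVec (y : A) (a : ι) :
    ε (e a * y) = (gramMatrix ε e *ᵥ e.repr y) a := by
  conv_lhs => rw [← e.sum_repr y]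
  simp only [mul_sum, mul_smul_comm, map_sum, map_smul, smul_eq_mul, mulVec, dotProduct,
    gramMatrix, of_apply, mul_comm]

variable [DecidableEq ι]

lemma sum_apply_mul_smul_dualFamily (hB : gramMatrix ε e * B = 1) (y : A) :
    ∑ a, ε (y * e a) • dualFamily e B a = y := by
  refine e.ext_elem fun b => ?_
  have h := congrFun (congrArg (vecMul (e.repr y)) hB) b
  rw [← vecMul_vecMul, vecMul_one] at h
  simpa [dualFamily, smul_sum, smul_smul, apply_mul_basis_eq_vecMul_gramMatrix, vecMul,
    dotProduct, Finsupp.single_apply] using h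

lemma sum_apply_dualFamily_mul_smul (hB : B * gramMatrix ε e = 1) (y : A) :
    ∑ a, ε (dualFamily e B a * y) • e a = y := by
  refine e.ext_elem fun c => ?_
  have h := congrFun (congrArg (· *ᵥ e.repr y) hB) c
  rw [← mulVec_mulVec, one_mulVec] at h
  simpa [dualFamily, sum_mul, smul_mul_assoc, apply_basis_mul_eq_gramMatrix_mulVec, mulVec,
    dotProduct, Finsupp.single_apply] using h

variable {M : Type*} [AddCommGroup M] [Module k M] (T : A →ₗ[k] A →ₗ[k] M)

theorem sum_apply_map_dualFamily_eq_of_adjoint (hB₁ : gramMatrix ε e * B = 1)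
    (hB₂ : B * gramMatrix ε e = 1) (φ ψ : A →ₗ[k] A)
    (hadj : ∀ u v, ε (ψ v * u) = ε (v * φ u)) :
    ∑ a, T (φ (e a)) (dualFamily e B a) = ∑ a, T (e a) (ψ (dualFamily e B a)) := by
  calc ∑ a, T (φ (e a)) (dualFamily e B a)
      = ∑ a, ∑ c, ε (dualFamily e B c * φ (e a)) • T (e c) (dualFamily e B a) := by
        refine sum_congr rfl fun a _ => ?_
        conv_lhs => rw [← sum_apply_dualFamily_mul_smul ε e B hB₂ (φ (e a))]
        simp only [map_sum, map_smul, LinearMap.sum_apply, LinearMap.smul_apply]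
    _ = ∑ c, ∑ a, ε (dualFamily e B c * φ (e a)) • T (e c) (dualFamily e B a) := sum_comm
    _ = ∑ c, T (e c) (ψ (dualFamily e B c)) := by
        refine sum_congr rfl fun c _ => ?_
        conv_rhs => rw [← sum_apply_mul_smul_dualFamily ε e B hB₁ (ψ (dualFamily e B c))]
        simp only [map_sum, map_smul, hadj]

theorem sum_apply_mul_left_dualFamily (hB₁ : gramMatrix ε e * B = 1)
    (hB₂ : B * gramMatrix ε e = 1) (x : A) :
    ∑ a, T (x * e a) (dualFamily e B a) = ∑ a, T (e a) (dualFamily e B a * x) :=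
  sum_apply_map_dualFamily_eq_of_adjoint ε e B T hB₁ hB₂ (LinearMap.mulLeft k x)
    (LinearMap.mulRight k x) fun u v => by simp [mul_assoc]

theorem sum_apply_dualFamily_swap (hsym : ∀ x y, ε (x * y) = ε (y * x))
    (hB₂ : B * gramMatrix ε e = 1) :
    ∑ a, T (dualFamily e B a) (e a) = ∑ a, T (e a) (dualFamily e B a) := by
  have hBsymm : B.IsSymm := by
    rw [← inv_eq_left_inv hB₂]
    exact IsSymm.inv (IsSymm.ext fun a b => hsym (e b) (e a))
  calc ∑ a, T (dualFamily e B a) (e a) = ∑ a, ∑ b, B a b • T (e b) (e a) := by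
        simp only [dualFamily, map_sum, map_smul, LinearMap.sum_apply, LinearMap.smul_apply]
    _ = ∑ b, ∑ a, B b a • T (e b) (e a) := by
        rw [sum_comm]
        exact sum_congr rfl fun b _ => sum_congr rfl fun a _ => by rw [hBsymm.apply b a]
    _ = _ := sum_sum_smul_apply_eq_sum_apply_dualFamily e B T

theorem sum_apply_map_map_dualFamily (hsym : ∀ x y, ε (x * y) = ε (y * x))
    (hB₁ : gramMatrix ε e * B = 1) (hB₂ : B * gramMatrix ε e = 1) (σ : A →ₗ[k] A)
    (hσ : IsInvariantAntiInvolution ε σ) :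
    ∑ a, T (σ (e a)) (σ (dualFamily e B a)) = ∑ a, T (e a) (dualFamily e B a) := by
  have hadj : ∀ u v, ε (σ v * u) = ε (v * σ u) := fun u v => by
    rw [← hσ.apply_map (v * σ u), hσ.map_mul, hσ.map_map, hsym]
  simpa only [LinearMap.compl₂_apply, hσ.map_map] using
    sum_apply_map_dualFamily_eq_of_adjoint ε e B (T.compl₂ σ) hB₁ hB₂ σ σ hadj

theorem mul_casimir_comm (hB₁ : gramMatrix ε e * B = 1) (hB₂ : B * gramMatrix ε e = 1)
    (x y : A) : x * casimir e B y = casimir e B y * x := by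
  simpa [casimir, mul_sum, sum_mul, mul_assoc] using
    sum_apply_mul_left_dualFamily ε e B ((LinearMap.mul k A).comp (LinearMap.mulRight k y))
      hB₁ hB₂ x

section AntiInvolution

variable (σ : A →ₗ[k] A)

theorem twistedCasimir_eq_sum_map_mul (hsym : ∀ x y, ε (x * y) = ε (y * x))
    (hB₁ : gramMatrix ε e * B = 1) (hB₂ : B * gramMatrix ε e = 1)
    (hσ : IsInvariantAntiInvolution ε σ) (y : A) :
    twistedCasimir e B σ y = ∑ a, σ (e a) * y * dualFamily e B a := by
  simpa [twistedCasimir_apply, hσ.map_map] using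
    sum_apply_map_map_dualFamily ε e B
      ((LinearMap.mul k A).comp ((LinearMap.mulRight k y).comp σ)) hsym hB₁ hB₂ σ hσ

theorem mul_twistedCasimir (hB₁ : gramMatrix ε e * B = 1) (hB₂ : B * gramMatrix ε e = 1)
    (hanti : ∀ x y, σ (x * y) = σ y * σ x) (x y : A) :
    x * twistedCasimir e B σ y = twistedCasimir e B σ (y * σ x) := by
  simpa [twistedCasimir_apply, mul_sum, mul_assoc, hanti] using
    sum_apply_mul_left_dualFamily ε e B
      (((LinearMap.mul k A).comp (LinearMap.mulRight k y)).compl₂ σ) hB₁ hB₂ x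

theorem twistedCasimir_mul (hsym : ∀ x y, ε (x * y) = ε (y * x))
    (hB₁ : gramMatrix ε e * B = 1) (hB₂ : B * gramMatrix ε e = 1)
    (hσ : IsInvariantAntiInvolution ε σ) (x y : A) :
    twistedCasimir e B σ y * x = twistedCasimir e B σ (σ x * y) := by
  simp only [twistedCasimir_eq_sum_map_mul ε e B σ hsym hB₁ hB₂ hσ, sum_mul]
  simpa [mul_assoc, hσ.map_mul] using
    (sum_apply_mul_left_dualFamily ε e B
      ((LinearMap.mul k A).comp ((LinearMap.mulRight k y).comp σ)) hB₁ hB₂ x).symm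

theorem twistedCasimir_one_commute (hsym : ∀ x y, ε (x * y) = ε (y * x))
    (hB₁ : gramMatrix ε e * B = 1) (hB₂ : B * gramMatrix ε e = 1)
    (hσ : IsInvariantAntiInvolution ε σ) (x : A) :
    twistedCasimir e B σ 1 * x = x * twistedCasimir e B σ 1 := by
  rw [twistedCasimir_mul ε e B σ hsym hB₁ hB₂ hσ,
    mul_twistedCasimir ε e B σ hB₁ hB₂ hσ.map_mul, mul_one, one_mul]

theorem twistedCasimir_one_mul_map (hsym : ∀ x y, ε (x * y) = ε (y * x))
    (hB₁ : gramMatrix ε e * B = 1) (hB₂ : B * gramMatrix ε e = 1)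
    (hσ : IsInvariantAntiInvolution ε σ) (y : A) :
    twistedCasimir e B σ 1 * σ y = twistedCasimir e B σ y := by
  rw [twistedCasimir_mul ε e B σ hsym hB₁ hB₂ hσ, hσ.map_map, mul_one]

theorem map_twistedCasimir_one (hsym : ∀ x y, ε (x * y) = ε (y * x))
    (hB₂ : B * gramMatrix ε e = 1) (hanti : ∀ x y, σ (x * y) = σ y * σ x)
    (hinvol : ∀ x, σ (σ x) = x) :
    σ (twistedCasimir e B σ 1) = twistedCasimir e B σ 1 := by
  simpa [twistedCasimir_apply, hanti, hinvol] using
    sum_apply_dualFamily_swap ε e B ((LinearMap.mul k A).compl₂ σ) hsym hB₂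

theorem twistedCasimir_one_mul_self (hsym : ∀ x y, ε (x * y) = ε (y * x))
    (hB₁ : gramMatrix ε e * B = 1) (hB₂ : B * gramMatrix ε e = 1)
    (hσ : IsInvariantAntiInvolution ε σ) :
    twistedCasimir e B σ 1 * twistedCasimir e B σ 1
      = ∑ a, casimir e B (e a) * σ (dualFamily e B a) := by
  calc twistedCasimir e B σ 1 * twistedCasimir e B σ 1
      = ∑ b, e b * (twistedCasimir e B σ 1 * σ (dualFamily e B b)) := by
        conv_lhs => enter [1]; rw [twistedCasimir_apply]
        rw [sum_mul]
        refine sum_congr rfl fun b _ => ?_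
        rw [mul_one, mul_assoc,
          ← twistedCasimir_one_commute ε e B σ hsym hB₁ hB₂ hσ]
    _ = ∑ b, e b * twistedCasimir e B σ (dualFamily e B b) := by
        simp only [twistedCasimir_one_mul_map ε e B σ hsym hB₁ hB₂ hσ]
    _ = ∑ b, ∑ a, e b * e a * dualFamily e B b * σ (dualFamily e B a) := by
        simp only [twistedCasimir_apply, mul_sum, mul_assoc]
    _ = ∑ a, casimir e B (e a) * σ (dualFamily e B a) := by
        rw [sum_comm]
        simp only [casimir, sum_mul]

theorem sum_casimir_mul_dualFamily_mul_twistedCasimir_one (hsym : ∀ x y, ε (x * y) = ε (y * x))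
    (hB₁ : gramMatrix ε e * B = 1) (hB₂ : B * gramMatrix ε e = 1)
    (hσ : IsInvariantAntiInvolution ε σ) :
    (∑ a, casimir e B (e a) * dualFamily e B a) * twistedCasimir e B σ 1
      = twistedCasimir e B σ (∑ a, casimir e B (e a) * σ (dualFamily e B a)) := by
  rw [sum_mul, map_sum]
  refine sum_congr rfl fun a _ => ?_
  have hcentral : ∀ x, casimir e B (e a) * x = x * casimir e B (e a) :=
    fun x => (mul_casimir_comm ε e B hB₁ hB₂ x (e a)).symm
  rw [mul_assoc, ← twistedCasimir_one_commute ε e B σ hsym hB₁ hB₂ hσ,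
    ← mul_twistedCasimir_of_forall_commute e B σ hcentral,
    ← twistedCasimir_one_mul_map ε e B σ hsym hB₁ hB₂ hσ (σ _), hσ.map_map]

end AntiInvolution

end SymmetricFrobenius

open SymmetricFrobenius in
theorem statement7_general (k : Type) [Field k] (A : Type) [Ring A] [Algebra k A]
    (ε : A →ₗ[k] k)
    (hsym : ∀ x y, ε (x * y) = ε (y * x))
    (ι : Type) [Fintype ι] [DecidableEq ι] (e : Module.Basis ι k A) (B : Matrix ι ι k)
    (hB1 : Matrix.of (fun a b => ε (e a * e b)) * B = 1)
    (hB2 : B * Matrix.of (fun a b => ε (e a * e b)) = 1)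
    (st : A → A) (hlin : IsLinearMap k st)
    (hanti : ∀ a b, st (a * b) = st b * st a)
    (hinvol : ∀ a, st (st a) = a)
    (hstε : ∀ a, ε (st a) = ε a) :
    (∀ a, (∑ p, ∑ q, B p q • (e p * st (e q))) * a
        = a * (∑ p, ∑ q, B p q • (e p * st (e q)))) ∧
    (∑ p, ∑ q, B p q • (e p * st (e q))) *
        (∑ a, ∑ b, ∑ c, ∑ d, (B a c * B b d) • (e a * e b * e c * e d))
      = (∑ p, ∑ q, B p q • (e p * st (e q))) ^ 3 := by
  let σ : A →ₗ[k] A := IsLinearMap.mk' st hlin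
  have hσ : IsInvariantAntiInvolution ε σ := ⟨hanti, hinvol, hstε⟩
  have hw : ∑ p, ∑ q, B p q • (e p * st (e q)) = twistedCasimir e B σ 1 :=
    sum_sum_smul_mul_map_eq_twistedCasimir_one e B σ
  have hcentral := twistedCasimir_one_commute ε e B σ hsym hB1 hB2 hσ
  rw [hw, sum_smul_mul_eq_sum_casimir_mul_dualFamily]
  refine ⟨hcentral, ?_⟩
  have hσw := map_twistedCasimir_one ε e B σ hsym hB2 hσ.map_mul hσ.map_map
  set w := twistedCasimir e B σ 1
  set z := ∑ a, casimir e B (e a) * dualFamily e B a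
  calc w * z = z * w := hcentral z
    _ = twistedCasimir e B σ (w * w) :=
        (sum_casimir_mul_dualFamily_mul_twistedCasimir_one ε e B σ hsym hB1 hB2 hσ).trans
          (congrArg _ (twistedCasimir_one_mul_self ε e B σ hsym hB1 hB2 hσ).symm)
    _ = w * σ (w * w) := (twistedCasimir_one_mul_map ε e B σ hsym hB1 hB2 hσ _).symm
    _ = w ^ 3 := by rw [hσ.map_mul, hσw, pow_three]

/-- For a finite-dimensional algebra `A` over a field `k` with symmetric
nondegenerate Frobenius form `ε`, special element condition `R·Σ B^{ab}·eₐ·e_b = 1`, and a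
`k`-linear involution `*` with `ε ∘ * = ε`, the element `w = Σ B^{ab}·eₐ·(e_b)*` is central
and satisfies `w·z = w³`, where `z = Σ B^{ac}·B^{bd}·eₐ·e_b·e_c·e_d`. -/
theorem statement7 (k : Type) [Field k] (A : Type) [Ring A] [Algebra k A]
    [FiniteDimensional k A]
    (ε : A →ₗ[k] k)
    (hnd : ∀ x, (∀ y, ε (x * y) = 0) → x = 0)
    (hsym : ∀ x y, ε (x * y) = ε (y * x))
    (ι : Type) [Fintype ι] [DecidableEq ι] (e : Module.Basis ι k A) (B : Matrix ι ι k)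
    (hB1 : Matrix.of (fun a b => ε (e a * e b)) * B = 1)
    (hB2 : B * Matrix.of (fun a b => ε (e a * e b)) = 1)
    (R : k) (hR : R ≠ 0)
    (hspecial : R • (∑ a, ∑ b, B a b • (e a * e b)) = 1)
    (st : A → A) (hlin : IsLinearMap k st)
    (hanti : ∀ a b, st (a * b) = st b * st a)
    (hinvol : ∀ a, st (st a) = a)
    (hstε : ∀ a, ε (st a) = ε a) :
    (∀ a, (∑ p, ∑ q, B p q • (e p * st (e q))) * a
        = a * (∑ p, ∑ q, B p q • (e p * st (e q)))) ∧
    (∑ p, ∑ q, B p q • (e p * st (e q))) *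
        (∑ a, ∑ b, ∑ c, ∑ d, (B a c * B b d) • (e a * e b * e c * e d))
      = (∑ p, ∑ q, B p q • (e p * st (e q))) ^ 3 :=
  statement7_general k A ε hsym ι e B hB1 hB2 st hlin hanti hinvol hstε
end

section
/- Let k be a field, A a finite-dimensional associative unital k-algebra, and ε : A → k a k-linear functional such that the bilinear form (x,y) ↦ ε(x·y) is nondegenerate and symmetric (ε(x·y) = ε(y·x) for all x,y). Fix a basis {e_a} of A and let (B^{ab}) be the inverse of the matrix (ε(e_a·e_b))_{a,b}. Then for every x ∈ A, the element p(x) := Σ_{a,b} B^{ab}·e_a·x·e_b lies in the center of A. -/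
/-!
Put `f b := ∑ a, B a b • e a`. For the Gram matrix `G = (ε (e a * e b))`, `G * B = 1` says
`ε (e d * f b) = δ d b`, so the coordinates of `u` in the basis `e` are `ε (u * f b)`, and,
`ε` being nondegenerate, the family `f` spans with coordinates `ε (e c * u)`. Expanding
`e c * y` in `e` and `y * f b` in `f` writes both `p(x) * y` and `y * p(x)` as
`∑ b c, ε (e c * y * f b) • (f c * x * e b)`.
-/

open Finset

section FrobeniusDual

variable {k A ι : Type*} [CommRing k] [Ring A] [Algebra k A] [Fintype ι]

theorem sum_sum_smul_mul_mul (B : Matrix ι ι k) (e : ι → A) (x : A) :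
    ∑ a, ∑ b, B a b • (e a * x * e b) = ∑ b, (∑ a, B a b • e a) * x * e b := by
  simp only [sum_mul, smul_mul_assoc]
  exact sum_comm

theorem Module.Basis.eps_mul_sum_smul_eq_one_apply [DecidableEq ι] (ε : A →ₗ[k] k)
    (e : Module.Basis ι k A) {B : Matrix ι ι k}
    (hB : Matrix.of (fun a b => ε (e a * e b)) * B = 1) (d b : ι) :
    ε (e d * ∑ a, B a b • e a) = if d = b then 1 else 0 := by
  rw [← Matrix.one_apply, ← hB, Matrix.mul_apply]
  simp only [mul_sum, mul_smul_comm, map_sum, map_smul, smul_eq_mul, Matrix.of_apply, mul_comm]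

theorem Module.Basis.sum_eps_mul_smul [DecidableEq ι] (ε : A →ₗ[k] k)
    (e : Module.Basis ι k A) {f : ι → A}
    (hdual : ∀ d b, ε (e d * f b) = if d = b then 1 else 0) (u : A) :
    ∑ b, ε (u * f b) • e b = u := by
  have hrepr : ∀ b, ε (u * f b) = e.repr u b := by
    intro b
    conv_lhs => rw [← e.sum_repr u]
    simp only [sum_mul, smul_mul_assoc, map_sum, map_smul, hdual, smul_eq_mul, mul_ite, mul_one,
      mul_zero, Fintype.sum_ite_eq']
  simp only [hrepr]
  exact e.sum_repr u

theorem Module.Basis.sum_eps_mul_smul_dual [DecidableEq ι] (ε : A →ₗ[k] k)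
    (e : Module.Basis ι k A) {f : ι → A}
    (hdual : ∀ d b, ε (e d * f b) = if d = b then 1 else 0)
    (hnd : ∀ w, (∀ y, ε (y * w) = 0) → w = 0) (u : A) :
    ∑ c, ε (e c * u) • f c = u := by
  rw [← sub_eq_zero]
  refine hnd _ fun y => ?_
  rw [← e.sum_repr y]
  simp only [sum_mul, mul_sub, mul_sum, smul_mul_assoc, mul_smul_comm, hdual, map_sub, map_sum,
    map_smul]
  simp [mul_comm]

theorem commute_sum_mul_mul (ε : A →ₗ[k] k) {e f : ι → A}
    (hexp : ∀ u, ∑ b, ε (u * f b) • e b = u) (hexp' : ∀ u, ∑ c, ε (e c * u) • f c = u)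
    (x y : A) : Commute (∑ b, f b * x * e b) y := by
  calc (∑ c, f c * x * e c) * y
      = ∑ c, f c * x * ∑ b, ε (e c * y * f b) • e b := by
        simp only [hexp]
        simp only [sum_mul, mul_assoc]
    _ = ∑ b, (∑ c, ε (e c * (y * f b)) • f c) * x * e b := by
        simp only [mul_sum, sum_mul, mul_smul_comm, smul_mul_assoc, mul_assoc]
        exact sum_comm
    _ = y * ∑ b, f b * x * e b := by
        simp only [hexp', mul_sum, mul_assoc]

end FrobeniusDual

theorem statement9_general (k : Type) [Field k] (A : Type) [Ring A] [Algebra k A]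
    (ε : A →ₗ[k] k)
    (hnd : ∀ x, (∀ y, ε (x * y) = 0) → x = 0)
    (hsym : ∀ x y, ε (x * y) = ε (y * x))
    (ι : Type) [Fintype ι] [DecidableEq ι] (e : Module.Basis ι k A) (B : Matrix ι ι k)
    (hB1 : Matrix.of (fun a b => ε (e a * e b)) * B = 1) :
    ∀ x : A, ∀ y : A,
      (∑ a, ∑ b, B a b • (e a * x * e b)) * y = y * (∑ a, ∑ b, B a b • (e a * x * e b)) := by
  intro x y
  have hdual := e.eps_mul_sum_smul_eq_one_apply ε hB1
  have hnd' : ∀ w, (∀ y, ε (y * w) = 0) → w = 0 :=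
    fun w hw => hnd w fun y => hsym w y ▸ hw y
  rw [sum_sum_smul_mul_mul]
  exact commute_sum_mul_mul ε (e.sum_eps_mul_smul ε hdual)
    (e.sum_eps_mul_smul_dual ε hdual hnd') x y

/-- For a finite-dimensional algebra `A` over a field `k` with symmetric
nondegenerate Frobenius form `ε`, a basis `{eₐ}` and `(B^{ab})` the inverse of
`(ε(eₐ·e_b))`, the element `p(x) = Σ B^{ab}·eₐ·x·e_b` is central (commutes with every
element of `A`) for every `x`. -/
theorem statement9 (k : Type) [Field k] (A : Type) [Ring A] [Algebra k A]
    [FiniteDimensional k A]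
    (ε : A →ₗ[k] k)
    (hnd : ∀ x, (∀ y, ε (x * y) = 0) → x = 0)
    (hsym : ∀ x y, ε (x * y) = ε (y * x))
    (ι : Type) [Fintype ι] [DecidableEq ι] (e : Module.Basis ι k A) (B : Matrix ι ι k)
    (hB1 : Matrix.of (fun a b => ε (e a * e b)) * B = 1)
    (hB2 : B * Matrix.of (fun a b => ε (e a * e b)) = 1) :
    ∀ x : A, ∀ y : A,
      (∑ a, ∑ b, B a b • (e a * x * e b)) * y = y * (∑ a, ∑ b, B a b • (e a * x * e b)) :=
  statement9_general k A ε hnd hsym ι e B hB1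
end

section
/- A special Frobenius algebra is separable: let k be a field, A a finite-dimensional associative unital k-algebra, and ε : A → k a k-linear functional such that the bilinear form (x,y) ↦ ε(x·y) is nondegenerate; fix a basis {e_a} of A, let (B^{ab}) be the inverse of the matrix (ε(e_a·e_b))_{a,b}, and assume there is R ∈ k, R ≠ 0, with R·Σ_{a,b} B^{ab}·e_a·e_b = 1. Then there exists t ∈ A ⊗_k A such that (x ⊗ 1)·t = t·(1 ⊗ x) for all x ∈ A (multiplication taken in the tensor-product algebra A ⊗_k A) and μ(t) = 1, where μ : A ⊗_k A → A is the linear map induced by multiplication. -/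
/-!
Put `f j = ∑ a, B a j • e a`. Since `B` is a two-sided inverse of the Gram matrix of the pairing
`ε (x * y)`, the families `e` and `f` are dual to each other, so every `y` expands both as
`∑ i, ε (e i * y) • f i` and as `∑ i, ε (y * f i) • e i`. Expanding `x * f j` the first way and
`e i * x` the second way shows that the Casimir element `c = ∑ i, f i ⊗ e i` satisfies
`(x ⊗ 1) * c = c * (1 ⊗ x)`, while `μ c = ∑ a b, B a b • (e a * e b)`; hence `t = R • c` works.
-/

open scoped TensorProduct

open Matrix Module

section

variable {k A ι : Type*} [CommSemiring k] [Semiring A] [Algebra k A] [Fintype ι]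

theorem sum_mul_tmul_eq_sum_tmul_mul (ε : A →ₗ[k] k) {e f : ι → A}
    (hf : ∀ y, ∑ i, ε (e i * y) • f i = y) (he : ∀ y, ∑ i, ε (y * f i) • e i = y) (x : A) :
    ∑ i, (x * f i) ⊗ₜ[k] e i = ∑ i, f i ⊗ₜ[k] (e i * x) :=
  calc ∑ j, (x * f j) ⊗ₜ[k] e j
      = ∑ j, (∑ i, ε (e i * (x * f j)) • f i) ⊗ₜ[k] e j := by simp_rw [hf]
    _ = ∑ i, f i ⊗ₜ[k] ∑ j, ε (e i * x * f j) • e j := by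
        simp_rw [TensorProduct.sum_tmul, TensorProduct.tmul_sum, ← TensorProduct.smul_tmul',
          TensorProduct.tmul_smul, mul_assoc]
        exact Finset.sum_comm
    _ = ∑ i, f i ⊗ₜ[k] (e i * x) := by simp_rw [he]

def frobeniusMatrix (ε : A →ₗ[k] k) (e : ι → A) : Matrix ι ι k := of fun a b => ε (e a * e b)

def dualFamily (e : ι → A) (B : Matrix ι ι k) : ι → A := fun j => ∑ a, B a j • e a

theorem mul'_sum_dualFamily_tmul (e : ι → A) (B : Matrix ι ι k) :
    LinearMap.mul' k A (∑ i, dualFamily e B i ⊗ₜ[k] e i) = ∑ a, ∑ b, B a b • (e a * e b) := by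
  simp only [map_sum, LinearMap.mul'_apply, dualFamily, Finset.sum_mul, smul_mul_assoc]
  exact Finset.sum_comm

variable (ε : A →ₗ[k] k) (e : Basis ι k A)

theorem apply_basis_mul_eq_frobeniusMatrix_mulVec (y : A) (i : ι) :
    ε (e i * y) = (frobeniusMatrix ε e *ᵥ e.repr y) i := by
  conv_lhs => rw [← e.sum_repr y]
  simp only [Finset.mul_sum, mul_smul_comm, map_sum, map_smul, smul_eq_mul, mulVec, dotProduct,
    frobeniusMatrix, of_apply, mul_comm]

theorem apply_mul_basis_eq_vecMul_frobeniusMatrix (y : A) (j : ι) :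
    ε (y * e j) = (e.repr y ᵥ* frobeniusMatrix ε e) j := by
  conv_lhs => rw [← e.sum_repr y]
  simp only [Finset.sum_mul, smul_mul_assoc, map_sum, map_smul, smul_eq_mul, vecMul, dotProduct,
    frobeniusMatrix, of_apply]

variable [DecidableEq ι] {B : Matrix ι ι k}

theorem sum_apply_mul_dualFamily_smul (hB : frobeniusMatrix ε e * B = 1) (y : A) :
    ∑ i, ε (y * dualFamily e B i) • e i = y := by
  have h : ∀ i, ε (y * dualFamily e B i) = e.repr y i := fun i => calc
    ε (y * dualFamily e B i) = ∑ a, (e.repr y ᵥ* frobeniusMatrix ε e) a * B a i := by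
      simp only [dualFamily, Finset.mul_sum, mul_smul_comm, map_sum, map_smul, smul_eq_mul,
        apply_mul_basis_eq_vecMul_frobeniusMatrix, mul_comm]
    _ = (e.repr y ᵥ* frobeniusMatrix ε e ᵥ* B) i := rfl
    _ = e.repr y i := by rw [vecMul_vecMul, hB, vecMul_one]
  simp_rw [h, e.sum_repr]

theorem sum_apply_basis_mul_smul_dualFamily (hB : B * frobeniusMatrix ε e = 1) (y : A) :
    ∑ i, ε (e i * y) • dualFamily e B i = y := calc
  ∑ i, ε (e i * y) • dualFamily e B i
      = ∑ a, (B *ᵥ (frobeniusMatrix ε e *ᵥ e.repr y)) a • e a := by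
    simp only [dualFamily, Finset.smul_sum, smul_smul, apply_basis_mul_eq_frobeniusMatrix_mulVec,
      mulVec, dotProduct, Finset.sum_smul, mul_comm]
    exact Finset.sum_comm
  _ = y := by rw [mulVec_mulVec, hB, one_mulVec, e.sum_repr]

end

theorem statement10_general (k : Type) [Field k] (A : Type) [Ring A] [Algebra k A]
    (ε : A →ₗ[k] k)
    (ι : Type) [Fintype ι] [DecidableEq ι] (e : Module.Basis ι k A) (B : Matrix ι ι k)
    (hB1 : Matrix.of (fun a b => ε (e a * e b)) * B = 1)
    (hB2 : B * Matrix.of (fun a b => ε (e a * e b)) = 1)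
    (R : k)
    (hspecial : R • (∑ a, ∑ b, B a b • (e a * e b)) = 1) :
    ∃ t : A ⊗[k] A,
      (∀ x : A, (x ⊗ₜ[k] (1 : A)) * t = t * ((1 : A) ⊗ₜ[k] x)) ∧
      LinearMap.mul' k A t = 1 := by
  refine ⟨R • ∑ i, dualFamily e B i ⊗ₜ[k] e i, fun x => ?_, ?_⟩
  · have hcasimir := sum_mul_tmul_eq_sum_tmul_mul ε
      (sum_apply_basis_mul_smul_dualFamily ε e hB2) (sum_apply_mul_dualFamily_smul ε e hB1) x
    simp only [mul_smul_comm, smul_mul_assoc, Finset.mul_sum, Finset.sum_mul,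
      Algebra.TensorProduct.tmul_mul_tmul, mul_one, one_mul, hcasimir]
  · rw [map_smul, mul'_sum_dualFamily_tmul, hspecial]

/-- A special Frobenius algebra is separable: there exists `t ∈ A ⊗ A` with
`(x ⊗ 1)·t = t·(1 ⊗ x)` for all `x` and `μ(t) = 1`. -/
theorem statement10 (k : Type) [Field k] (A : Type) [Ring A] [Algebra k A]
    [FiniteDimensional k A]
    (ε : A →ₗ[k] k)
    (hnd : ∀ x, (∀ y, ε (x * y) = 0) → x = 0)
    (ι : Type) [Fintype ι] [DecidableEq ι] (e : Module.Basis ι k A) (B : Matrix ι ι k)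
    (hB1 : Matrix.of (fun a b => ε (e a * e b)) * B = 1)
    (hB2 : B * Matrix.of (fun a b => ε (e a * e b)) = 1)
    (R : k) (hR : R ≠ 0)
    (hspecial : R • (∑ a, ∑ b, B a b • (e a * e b)) = 1) :
    ∃ t : A ⊗[k] A,
      (∀ x : A, (x ⊗ₜ[k] (1 : A)) * t = t * ((1 : A) ⊗ₜ[k] x)) ∧
      LinearMap.mul' k A t = 1 :=
  statement10_general k A ε ι e B hB1 hB2 R hspecial
end

section
/- Let N ≥ 1, n : Fin N → ℕ with nᵢ ≥ 1, and A = ⊕_{i=1}^{N} M_{n_i}(ℂ). Let ε : A → ℂ be a ℂ-linear functional such that the bilinear form (a,b) ↦ ε(a·b) is nondegenerate. Then there exist invertible matrices x_i ∈ M_{n_i}(ℂ) such that ε(a) = Σ_{i=1}^{N} Tr(x_i·a_i) for all a ∈ A, and these x_i are unique. Moreover, for R ∈ ℂ with R ≠ 0 and any basis {e_a} of A with (B^{ab}) the inverse of the matrix (ε(e_a·e_b))_{a,b}, one has R·Σ_{a,b} B^{ab}·e_a·e_b = 1 if and only if R·Tr(x_i⁻¹) = 1 for every i. -/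
/-!
Every linear functional on `⊕ᵢ M_{nᵢ}(ℂ)` is `a ↦ ∑ᵢ Tr(xᵢ aᵢ)` for a unique `x`, since the trace
pairing is nondegenerate. If `x m = 0` then `ε (m y) = 0` for all `y`, so nondegeneracy of `ε`
makes `x` left regular, hence a unit of this finite-dimensional algebra.

With `Fₐ = ∑_b B^{ab} e_b`, the element `∑ B^{ab} eₐ e_b` is `∑ₐ eₐ Fₐ`. For any two pairs of
families dual with respect to `ε` the sums `∑ eₐ Fₐ` agree, so it can be computed with the matrix
units `E_{jk}` of each block and their duals `xᵢ⁻¹ E_{kj}`, which gives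
`∑_{j,k} E_{jk} xᵢ⁻¹ E_{kj} = Tr(xᵢ⁻¹) • 1` in block `i`.
-/

open Matrix

theorem Finset.univ_sum_sigma_pi_single {ι : Type*} [Fintype ι] [DecidableEq ι] {κ : ι → Type*}
    [∀ i, Fintype (κ i)] {M : ι → Type*} [∀ i, AddCommMonoid (M i)] (g : ∀ i, κ i → M i) :
    ∑ s : Σ i, κ i, Pi.single s.1 (g s.1 s.2) = fun i => ∑ t, g i t := by
  rw [Fintype.sum_sigma]
  conv_rhs => rw [← Finset.univ_sum_single fun i => ∑ t, g i t]
  exact Finset.sum_congr rfl fun i _ => (map_sum (AddMonoidHom.single M i) _ _).symm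

section SingleBlock

variable {n R : Type*} [Fintype n] [DecidableEq n]

theorem Matrix.linearMap_apply_eq_trace_mul [CommSemiring R] (φ : Matrix n n R →ₗ[R] R)
    (M : Matrix n n R) :
    φ M = trace (of (fun p q => φ (single q p 1)) * M) := by
  conv_lhs => rw [matrix_eq_sum_single M]
  simp only [map_sum, trace, diag, mul_apply, of_apply]
  rw [Finset.sum_comm]
  refine Finset.sum_congr rfl fun p _ => Finset.sum_congr rfl fun q _ => ?_
  rw [← mul_one (M q p), ← smul_eq_mul, ← smul_single, map_smul, smul_eq_mul, smul_eq_mul,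
    mul_one, mul_comm]

variable [CommRing R]

theorem Matrix.sum_trace_mul_single_smul_inv_mul {x : Matrix n n R} (hx : IsUnit x)
    (M : Matrix n n R) :
    ∑ j, ∑ k, trace (x * M * single j k 1) • (x⁻¹ * single k j 1) = M := by
  have hdet : IsUnit x.det := (isUnit_iff_isUnit_det x).1 hx
  simp only [trace_mul_single, MulOpposite.op_one, one_smul, ← mul_smul_comm, ← Finset.mul_sum,
    smul_single, smul_eq_mul, mul_one]
  rw [Finset.sum_comm, ← matrix_eq_sum_single, nonsing_inv_mul_cancel_left _ _ hdet]

theorem Matrix.sum_single_mul_mul_single (M : Matrix n n R) :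
    ∑ j, ∑ k, single j k (1 : R) * M * single k j 1 = trace M • 1 := by
  have hrow : ∀ j : n, ∑ k, single j j (M k k) = single j j (trace M) := fun j =>
    (map_sum (singleAddMonoidHom (α := R) j j) _ _).symm
  simp only [single_mul_mul_single, one_mul, mul_one, hrow, sum_single_eq_diagonal,
    smul_one_eq_diagonal]

end SingleBlock

section DualFamilies

variable {K A : Type*} [CommSemiring K] [Semiring A] [Algebra K A] (ε : A →ₗ[K] K)

theorem sum_mul_eq_sum_mul_of_dual {ι σ : Type*} [Fintype ι] [Fintype σ] {e F : ι → A}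
    {E f : σ → A} (hL : ∀ u, ∑ a, ε (F a * u) • e a = u)
    (hR : ∀ u, ∑ s, ε (u * E s) • f s = u) :
    ∑ a, e a * F a = ∑ s, E s * f s :=
  calc ∑ a, e a * F a = ∑ a, e a * ∑ s, ε (F a * E s) • f s := by simp only [hR]
    _ = ∑ s, (∑ a, ε (F a * E s) • e a) * f s := by
      simp only [Finset.mul_sum, Finset.sum_mul, mul_smul_comm, smul_mul_assoc]
      exact Finset.sum_comm
    _ = ∑ s, E s * f s := by simp only [hL]

theorem Module.Basis.sum_apply_mul_smul_of_mul_gram_eq_one {ι : Type*} [Fintype ι]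
    [DecidableEq ι] (e : Module.Basis ι K A) {B : Matrix ι ι K}
    (hB : B * of (fun a b => ε (e a * e b)) = 1) (u : A) :
    ∑ a, ε ((∑ b, B a b • e b) * u) • e a = u := by
  have hgram : (fun b => ε (e b * u)) = of (fun a b => ε (e a * e b)) *ᵥ e.repr u := by
    funext b
    conv_lhs => rw [← e.sum_repr u]
    simp only [Finset.mul_sum, mul_smul_comm, map_sum, map_smul, smul_eq_mul, mulVec, dotProduct,
      of_apply, mul_comm]
  have hcoord : (fun a => ε ((∑ b, B a b • e b) * u)) = e.repr u :=
    calc (fun a => ε ((∑ b, B a b • e b) * u)) = B *ᵥ fun b => ε (e b * u) := by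
          funext a
          simp [Finset.sum_mul, mulVec, dotProduct]
      _ = e.repr u := by rw [hgram, mulVec_mulVec, hB, one_mulVec]
  conv_rhs => rw [← e.sum_repr u]
  exact Finset.sum_congr rfl fun a _ => by rw [← congrFun hcoord a]

end DualFamilies

section TraceForm

variable {ι : Type*} [Fintype ι] {m : ι → Type*} [∀ i, Fintype (m i)] [∀ i, DecidableEq (m i)]

theorem isUnit_of_nondegenerate_sum_trace_mul {K : Type*} [Field K]
    {ε : (∀ i, Matrix (m i) (m i) K) → K} (hnd : ∀ a, (∀ b, ε (a * b) = 0) → a = 0)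
    {x : ∀ i, Matrix (m i) (m i) K} (hε : ∀ a, ε a = ∑ i, trace (x i * a i)) : IsUnit x := by
  refine IsArtinianRing.isUnit_iff_isLeftRegular.2 <|
    isLeftRegular_iff_right_eq_zero_of_mul.2 fun a hxa => hnd a fun b => ?_
  have hxab : ∀ i, x i * (a i * b i) = 0 := fun i => by
    rw [← Matrix.mul_assoc, ← Pi.mul_apply x a, hxa, Pi.zero_apply, Matrix.zero_mul]
  simp only [hε, Pi.mul_apply, hxab, trace_zero, Finset.sum_const_zero]

variable [DecidableEq ι] {R : Type*} [CommSemiring R]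

theorem sum_trace_mul_pi_single (x : ∀ i, Matrix (m i) (m i) R) (i : ι)
    (M : Matrix (m i) (m i) R) :
    ∑ j, trace (x j * (Pi.single i M : ∀ j, Matrix (m j) (m j) R) j) = trace (x i * M) := by
  rw [Fintype.sum_eq_single i fun j hj => by simp [Pi.single_eq_of_ne hj], Pi.single_eq_same]

theorem exists_sum_trace_mul_eq (φ : (∀ i, Matrix (m i) (m i) R) →ₗ[R] R) :
    ∃ x : ∀ i, Matrix (m i) (m i) R, ∀ a, φ a = ∑ i, trace (x i * a i) := by
  refine ⟨fun i => of fun p q => φ (Pi.single i (single q p 1)), fun a => ?_⟩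
  conv_lhs => rw [← Finset.univ_sum_single a, map_sum]
  exact Finset.sum_congr rfl fun i _ =>
    linearMap_apply_eq_trace_mul (φ ∘ₗ LinearMap.single R (fun i => Matrix (m i) (m i) R) i) (a i)

theorem eq_of_forall_sum_trace_mul_eq {x y : ∀ i, Matrix (m i) (m i) R}
    (h : ∀ a : ∀ i, Matrix (m i) (m i) R, ∑ i, trace (x i * a i) = ∑ i, trace (y i * a i)) :
    x = y :=
  funext fun i => ext_iff_trace_mul_right.2 fun M => by
    simpa only [sum_trace_mul_pi_single] using h (Pi.single i M)

end TraceForm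

section MatrixUnits

variable {ι : Type*} [Fintype ι] [DecidableEq ι] {m : ι → Type*} [∀ i, Fintype (m i)]
  [∀ i, DecidableEq (m i)] (K : Type*) [CommRing K]

def piMatrixUnit (s : Σ i, m i × m i) : ∀ i, Matrix (m i) (m i) K :=
  Pi.single s.1 (single s.2.1 s.2.2 1)

variable {K}

noncomputable def piMatrixUnitDual (x : ∀ i, Matrix (m i) (m i) K) (s : Σ i, m i × m i) :
    ∀ i, Matrix (m i) (m i) K :=
  Pi.single s.1 ((x s.1)⁻¹ * single s.2.2 s.2.1 1)

theorem sum_smul_piMatrixUnitDual {x : ∀ i, Matrix (m i) (m i) K} (hx : ∀ i, IsUnit (x i))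
    {ε : (∀ i, Matrix (m i) (m i) K) → K} (hε : ∀ a, ε a = ∑ i, trace (x i * a i))
    (u : ∀ i, Matrix (m i) (m i) K) :
    ∑ s, ε (u * piMatrixUnit K s) • piMatrixUnitDual x s = u := by
  have hterm : ∀ s : Σ i, m i × m i, ε (u * piMatrixUnit K s) • piMatrixUnitDual x s =
      Pi.single s.1 (trace (x s.1 * u s.1 * single s.2.1 s.2.2 1) •
        ((x s.1)⁻¹ * single s.2.2 s.2.1 1)) := fun s => by
    rw [piMatrixUnit, piMatrixUnitDual, ← Pi.single_mul_right, hε, sum_trace_mul_pi_single,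
      Matrix.mul_assoc, Pi.single_smul]
  rw [Finset.sum_congr rfl fun s _ => hterm s]
  refine (Finset.univ_sum_sigma_pi_single fun i (t : m i × m i) =>
    trace (x i * u i * single t.1 t.2 1) • ((x i)⁻¹ * single t.2 t.1 1)).trans (funext fun i => ?_)
  rw [Fintype.sum_prod_type]
  exact sum_trace_mul_single_smul_inv_mul (hx i) (u i)

theorem sum_piMatrixUnit_mul_piMatrixUnitDual (x : ∀ i, Matrix (m i) (m i) K) :
    ∑ s, piMatrixUnit K s * piMatrixUnitDual x s = fun i => trace (x i)⁻¹ • 1 := by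
  simp only [piMatrixUnit, piMatrixUnitDual, ← Pi.single_mul]
  refine (Finset.univ_sum_sigma_pi_single fun i (t : m i × m i) =>
    single t.1 t.2 1 * ((x i)⁻¹ * single t.2 t.1 1)).trans (funext fun i => ?_)
  rw [Fintype.sum_prod_type]
  simp only [← Matrix.mul_assoc]
  exact sum_single_mul_mul_single _

end MatrixUnits

theorem statement11_general (N : ℕ) (n : Fin N → ℕ) (hn : ∀ i, 1 ≤ n i)
    (ε : (∀ i, Matrix (Fin (n i)) (Fin (n i)) ℂ) →ₗ[ℂ] ℂ)
    (hnd : ∀ x, (∀ y, ε (x * y) = 0) → x = 0) :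
    (∃! x : ∀ i, Matrix (Fin (n i)) (Fin (n i)) ℂ,
      (∀ i, IsUnit (x i)) ∧ ∀ a, ε a = ∑ i, Matrix.trace (x i * a i)) ∧
    (∀ x : ∀ i, Matrix (Fin (n i)) (Fin (n i)) ℂ,
      (∀ i, IsUnit (x i)) → (∀ a, ε a = ∑ i, Matrix.trace (x i * a i)) →
      ∀ R : ℂ, R ≠ 0 →
      ∀ (ι : Type) [Fintype ι] [DecidableEq ι]
        (e : Module.Basis ι ℂ (∀ i, Matrix (Fin (n i)) (Fin (n i)) ℂ)) (B : Matrix ι ι ℂ),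
        Matrix.of (fun a b => ε (e a * e b)) * B = 1 →
        B * Matrix.of (fun a b => ε (e a * e b)) = 1 →
        (R • (∑ a, ∑ b, B a b • (e a * e b)) = 1 ↔
          ∀ i, R * Matrix.trace (x i)⁻¹ = 1)) := by
  refine ⟨?_, fun x hx hε R _ ι _ _ e B _ hBG => ?_⟩
  · obtain ⟨x, hε⟩ := exists_sum_trace_mul_eq ε
    refine ⟨x, ⟨Pi.isUnit_iff.1 (isUnit_of_nondegenerate_sum_trace_mul hnd hε), hε⟩, ?_⟩
    exact fun y hy => eq_of_forall_sum_trace_mul_eq fun a => (hy.2 a).symm.trans (hε a)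
  · have hcasimir : ∑ a, ∑ b, B a b • (e a * e b) = fun i => trace (x i)⁻¹ • 1 := by
      rw [← sum_piMatrixUnit_mul_piMatrixUnitDual x]
      simp only [← mul_smul_comm, ← Finset.mul_sum]
      exact sum_mul_eq_sum_mul_of_dual ε
        (e.sum_apply_mul_smul_of_mul_gram_eq_one ε hBG) (sum_smul_piMatrixUnitDual hx hε)
    rw [hcasimir, funext_iff]
    refine forall_congr' fun i => ?_
    have : Nonempty (Fin (n i)) := ⟨⟨0, hn i⟩⟩
    rw [Pi.smul_apply, smul_smul, Pi.one_apply, smul_one_eq_diagonal, ← diagonal_one,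
      diagonal_eq_diagonal_iff, forall_const]

/-- For `A = ⊕ᵢ Mₙᵢ(ℂ)` and a linear functional `ε` with nondegenerate form
`(a,b) ↦ ε(a·b)`, there exist unique invertible `xᵢ` with `ε(a) = Σᵢ Tr(xᵢ·aᵢ)`; moreover,
for `R ≠ 0` and any basis with `(B^{ab})` the inverse of `(ε(eₐ·e_b))`,
`R·Σ B^{ab}·eₐ·e_b = 1 ↔ ∀ i, R·Tr(xᵢ⁻¹) = 1`. -/
theorem statement11 (N : ℕ) (hN : 1 ≤ N) (n : Fin N → ℕ) (hn : ∀ i, 1 ≤ n i)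
    (ε : (∀ i, Matrix (Fin (n i)) (Fin (n i)) ℂ) →ₗ[ℂ] ℂ)
    (hnd : ∀ x, (∀ y, ε (x * y) = 0) → x = 0) :
    (∃! x : ∀ i, Matrix (Fin (n i)) (Fin (n i)) ℂ,
      (∀ i, IsUnit (x i)) ∧ ∀ a, ε a = ∑ i, Matrix.trace (x i * a i)) ∧
    (∀ x : ∀ i, Matrix (Fin (n i)) (Fin (n i)) ℂ,
      (∀ i, IsUnit (x i)) → (∀ a, ε a = ∑ i, Matrix.trace (x i * a i)) →
      ∀ R : ℂ, R ≠ 0 →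
      ∀ (ι : Type) [Fintype ι] [DecidableEq ι]
        (e : Module.Basis ι ℂ (∀ i, Matrix (Fin (n i)) (Fin (n i)) ℂ)) (B : Matrix ι ι ℂ),
        Matrix.of (fun a b => ε (e a * e b)) * B = 1 →
        B * Matrix.of (fun a b => ε (e a * e b)) = 1 →
        (R • (∑ a, ∑ b, B a b • (e a * e b)) = 1 ↔
          ∀ i, R * Matrix.trace (x i)⁻¹ = 1)) :=
  statement11_general N n hn ε hnd
end

section
/- Let N ≥ 1, n : Fin N → ℕ with nᵢ ≥ 1, A = ⊕_{i=1}^{N} M_{n_i}(ℂ), and let x_i ∈ M_{n_i}(ℂ) be invertible matrices. Define ε : A → ℂ by ε(a) = Σ_{i=1}^{N} Tr(x_i·a_i), and suppose that ε is symmetric (ε(a·b) = ε(b·a) for all a,b) and that for some R ∈ ℂ, R ≠ 0, and some basis {e_a} of A with (B^{ab}) the inverse of the matrix (ε(e_a·e_b))_{a,b}, one has R·Σ_{a,b} B^{ab}·e_a·e_b = 1. Then x_i = R·n_i·1_{n_i} for every i, where 1_{n_i} is the identity matrix of M_{n_i}(ℂ). -/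
/-!
Dual bases for the symmetric form `(a, b) ↦ ε (a * b)` compute the trace of left
multiplication: `Tr (L_y) = ε (y * ∑ B^{ab} e_a e_b)`, so the hypothesis says
`Tr (L_y) = R⁻¹ ε(y)`. In `⊕ᵢ M_{nᵢ}(ℂ)`, left multiplication by `m` placed in the `i`-th
summand has trace `nᵢ Tr(m)`; hence `Tr (xᵢ m) = R nᵢ Tr(m)` for every `m`, which forces
`xᵢ = R nᵢ 1`.
-/

open Module

theorem LinearMap.trace_pi {R ι : Type*} [CommRing R] [Fintype ι]
    {M : ι → Type*} [∀ j, AddCommGroup (M j)] [∀ j, Module R (M j)]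
    [∀ j, Module.Free R (M j)] [∀ j, Module.Finite R (M j)]
    (f : ∀ j, Module.End R (M j)) :
    LinearMap.trace R (∀ j, M j) (LinearMap.pi fun j => f j ∘ₗ LinearMap.proj j) =
      ∑ j, LinearMap.trace R (M j) (f j) := by
  classical
  let s := fun j => Module.Free.chooseBasis R (M j)
  rw [LinearMap.trace_eq_matrix_trace R (Pi.basis s)]
  simp only [LinearMap.trace_eq_matrix_trace R (s _), Matrix.trace, Matrix.diag,
    LinearMap.toMatrix_apply]
  rw [← Finset.univ_sigma_univ, Finset.sum_sigma]
  refine Finset.sum_congr rfl fun j _ => Finset.sum_congr rfl fun k _ => ?_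
  simp [Pi.basis_repr, Pi.basis_apply]

theorem LinearMap.trace_mulLeft_pi {R ι : Type*} [CommRing R] [Fintype ι]
    {A : ι → Type*} [∀ j, Ring (A j)] [∀ j, Algebra R (A j)]
    [∀ j, Module.Free R (A j)] [∀ j, Module.Finite R (A j)] (y : ∀ j, A j) :
    LinearMap.trace R (∀ j, A j) (LinearMap.mulLeft R y) =
      ∑ j, LinearMap.trace R (A j) (LinearMap.mulLeft R (y j)) :=
  LinearMap.trace_pi fun j => LinearMap.mulLeft R (y j)

theorem Matrix.stdBasis_repr_apply_s12 {R m n : Type*} [Semiring R] [Fintype m] [Fintype n]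
    (M : Matrix m n R) (p : m × n) :
    (Matrix.stdBasis R m n).repr M p = M p.1 p.2 := by
  simp [Matrix.stdBasis]

theorem Matrix.trace_mulLeft {R m : Type*} [CommRing R] [Fintype m] [DecidableEq m]
    (y : Matrix m m R) :
    LinearMap.trace R (Matrix m m R) (LinearMap.mulLeft R y) = Fintype.card m * y.trace := by
  rw [LinearMap.trace_eq_matrix_trace R (Matrix.stdBasis R m m)]
  simp only [Matrix.trace, Matrix.diag, LinearMap.toMatrix_apply, Fintype.sum_prod_type]
  simp [Matrix.stdBasis_repr_apply_s12, Matrix.stdBasis_eq_single, Matrix.mul_apply,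
    Matrix.single_apply, Finset.mul_sum]

section Casimir

variable {K A ι : Type*} [CommRing K] [Ring A] [Algebra K A] [Fintype ι] [DecidableEq ι]
  (ε : A →ₗ[K] K) (e : Basis ι K A) {B : Matrix ι ι K}

theorem Module.Basis.repr_apply_eq_sum_of_gram_mul_eq_one
    (hB : Matrix.of (fun a b => ε (e a * e b)) * B = 1) (w : A) (c : ι) :
    e.repr w c = ∑ b, ε (w * e b) * B b c := by
  have hcoord : ∀ b, ε (w * e b) = ∑ a, e.repr w a * ε (e a * e b) := fun b => by
    conv_lhs => rw [← e.sum_repr w]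
    simp only [Finset.sum_mul, smul_mul_assoc, map_sum, map_smul, smul_eq_mul]
  calc e.repr w c = ∑ a, e.repr w a * (Matrix.of (fun a b => ε (e a * e b)) * B) a c := by
        simp [hB, Matrix.one_apply]
    _ = ∑ b, ε (w * e b) * B b c := by
        simp only [hcoord, Matrix.mul_apply, Matrix.of_apply, Finset.mul_sum, Finset.sum_mul]
        rw [Finset.sum_comm]
        simp only [mul_assoc]

theorem LinearMap.trace_mulLeft_eq_apply_mul_casimir
    (hB : Matrix.of (fun a b => ε (e a * e b)) * B = 1) (hBsymm : B.IsSymm) (y : A) :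
    LinearMap.trace K A (LinearMap.mulLeft K y) = ε (y * ∑ a, ∑ b, B a b • (e a * e b)) := by
  rw [LinearMap.trace_eq_matrix_trace K e, Matrix.trace]
  simp only [Matrix.diag, LinearMap.toMatrix_apply, LinearMap.mulLeft_apply,
    e.repr_apply_eq_sum_of_gram_mul_eq_one ε hB, Finset.mul_sum, mul_smul_comm, map_sum,
    map_smul, smul_eq_mul]
  refine Finset.sum_congr rfl fun a _ => Finset.sum_congr rfl fun b _ => ?_
  rw [hBsymm.apply, mul_comm, mul_assoc]

end Casimir

theorem statement12_general (N : ℕ) (n : Fin N → ℕ)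
    (x : ∀ i, Matrix (Fin (n i)) (Fin (n i)) ℂ)
    (ε : (∀ i, Matrix (Fin (n i)) (Fin (n i)) ℂ) → ℂ)
    (hε : ∀ a, ε a = ∑ i, Matrix.trace (x i * a i))
    (hsym : ∀ a b, ε (a * b) = ε (b * a))
    (R : ℂ) (hR : R ≠ 0)
    (ι : Type) [Fintype ι] [DecidableEq ι]
    (e : Module.Basis ι ℂ (∀ i, Matrix (Fin (n i)) (Fin (n i)) ℂ)) (B : Matrix ι ι ℂ)
    (hB1 : Matrix.of (fun a b => ε (e a * e b)) * B = 1)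
    (hspecial : R • (∑ a, ∑ b, B a b • (e a * e b)) = 1) :
    ∀ i, x i = (R * (n i : ℂ)) • (1 : Matrix (Fin (n i)) (Fin (n i)) ℂ) := by
  let L : (∀ i, Matrix (Fin (n i)) (Fin (n i)) ℂ) →ₗ[ℂ] ℂ :=
    ∑ i, Matrix.traceLinearMap _ ℂ ℂ ∘ₗ LinearMap.mulLeft ℂ (x i) ∘ₗ LinearMap.proj i
  obtain rfl : ε = L := funext fun a => by simp [hε, L]
  have hBsymm : B.IsSymm :=
    Matrix.inv_eq_right_inv hB1 ▸ Matrix.IsSymm.inv (Matrix.IsSymm.ext fun a b => hsym _ _)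
  have hcasimir : ∑ a, ∑ b, B a b • (e a * e b) = R⁻¹ • 1 := by
    rw [← hspecial, smul_smul, inv_mul_cancel₀ hR, one_smul]
  have htrace (y : ∀ i, Matrix (Fin (n i)) (Fin (n i)) ℂ) :
      ∑ i, (n i : ℂ) * (y i).trace = R⁻¹ * ∑ i, (x i * y i).trace := by
    have := LinearMap.trace_mulLeft_eq_apply_mul_casimir L e hB1 hBsymm y
    simpa [LinearMap.trace_mulLeft_pi, Matrix.trace_mulLeft, hcasimir, L] using this
  intro i
  refine Matrix.ext_iff_trace_mul_right.2 fun m => ?_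
  have hm := htrace (Pi.single i m)
  rw [Fintype.sum_eq_single i fun j hj => by simp [Pi.single_eq_of_ne hj],
    Fintype.sum_eq_single i fun j hj => by simp [Pi.single_eq_of_ne hj],
    Pi.single_eq_same] at hm
  rw [smul_mul_assoc, one_mul, Matrix.trace_smul, smul_eq_mul, mul_assoc, hm]
  field_simp

/-- For `A = ⊕ᵢ Mₙᵢ(ℂ)` with `ε(a) = Σᵢ Tr(xᵢ·aᵢ)` (`xᵢ` invertible), if `ε`
is symmetric and for some `R ≠ 0` and some basis `{eₐ}` with `(B^{ab})` the inverse of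
`(ε(eₐ·e_b))` one has `R·Σ B^{ab}·eₐ·e_b = 1`, then `xᵢ = R·nᵢ·1` for every `i`. -/
theorem statement12 (N : ℕ) (hN : 1 ≤ N) (n : Fin N → ℕ) (hn : ∀ i, 1 ≤ n i)
    (x : ∀ i, Matrix (Fin (n i)) (Fin (n i)) ℂ) (hx : ∀ i, IsUnit (x i))
    (ε : (∀ i, Matrix (Fin (n i)) (Fin (n i)) ℂ) → ℂ)
    (hε : ∀ a, ε a = ∑ i, Matrix.trace (x i * a i))
    (hsym : ∀ a b, ε (a * b) = ε (b * a))
    (R : ℂ) (hR : R ≠ 0)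
    (ι : Type) [Fintype ι] [DecidableEq ι]
    (e : Module.Basis ι ℂ (∀ i, Matrix (Fin (n i)) (Fin (n i)) ℂ)) (B : Matrix ι ι ℂ)
    (hB1 : Matrix.of (fun a b => ε (e a * e b)) * B = 1)
    (hB2 : B * Matrix.of (fun a b => ε (e a * e b)) = 1)
    (hspecial : R • (∑ a, ∑ b, B a b • (e a * e b)) = 1) :
    ∀ i, x i = (R * (n i : ℂ)) • (1 : Matrix (Fin (n i)) (Fin (n i)) ℂ) :=
  statement12_general N n x ε hε hsym R hR ι e B hB1 hspecial
end

section
/- Let k be a field, A a finite-dimensional associative unital k-algebra, and ε : A → k a k-linear functional such that the bilinear form (x,y) ↦ ε(x·y) is nondegenerate. Then there exists a unique k-linear map σ : A → A such that ε(x·y) = ε(σ(y)·x) for all x, y ∈ A, and this σ is a k-algebra automorphism of A (it is bijective, σ(1) = 1, and σ(x·y) = σ(x)·σ(y) for all x, y). -/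
/-!
The form `B x y = ε (x * y)` is nondegenerate, so both `x ↦ B x ·` and `y ↦ B · y` identify `A`
with its dual; composing one with the inverse of the other gives the unique `σ` with
`B x y = B (σ y) x`. Since `ε (a * ·)` determines `a`, multiplicativity of `σ` and `σ 1 = 1`
follow by evaluating both sides against an arbitrary `z` and moving factors around the cycle
`ε (x * y) = ε (σ y * x)`.
-/

namespace Frobenius

variable {k A : Type*}

def IsNakayama [CommRing k] [Ring A] [Algebra k A] (ε : A →ₗ[k] k) (σ : A → A) : Prop :=
  ∀ x y, ε (x * y) = ε (σ y * x)

section CommRing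

variable [CommRing k] [Ring A] [Algebra k A] {ε : A →ₗ[k] k}

theorem eq_of_forall_apply_mul_eq (hnd : ∀ x, (∀ y, ε (x * y) = 0) → x = 0) {a b : A}
    (h : ∀ z, ε (a * z) = ε (b * z)) : a = b :=
  sub_eq_zero.mp <| hnd _ fun z => by rw [sub_mul, map_sub, h z, sub_self]

theorem IsNakayama.eq (hnd : ∀ x, (∀ y, ε (x * y) = 0) → x = 0) {σ τ : A → A}
    (hσ : IsNakayama ε σ) (hτ : IsNakayama ε τ) : σ = τ :=
  funext fun y => eq_of_forall_apply_mul_eq hnd fun x => by rw [← hσ x y, hτ x y]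

theorem IsNakayama.map_one (hnd : ∀ x, (∀ y, ε (x * y) = 0) → x = 0) {σ : A → A}
    (hσ : IsNakayama ε σ) : σ 1 = 1 :=
  eq_of_forall_apply_mul_eq hnd fun z => by rw [← hσ z 1, mul_one, one_mul]

theorem IsNakayama.map_mul (hnd : ∀ x, (∀ y, ε (x * y) = 0) → x = 0) {σ : A → A}
    (hσ : IsNakayama ε σ) (x y : A) : σ (x * y) = σ x * σ y := by
  refine eq_of_forall_apply_mul_eq hnd fun z => ?_
  calc ε (σ (x * y) * z) = ε (z * x * y) := by rw [← hσ, mul_assoc]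
    _ = ε (σ y * z * x) := by rw [hσ, mul_assoc]
    _ = ε (σ x * σ y * z) := by rw [hσ, mul_assoc]

end CommRing

theorem exists_linearEquiv_isNakayama [Field k] [Ring A] [Algebra k A] [FiniteDimensional k A]
    {ε : A →ₗ[k] k} (hnd : ∀ x, (∀ y, ε (x * y) = 0) → x = 0) :
    ∃ σ : A ≃ₗ[k] A, IsNakayama ε σ := by
  let B : LinearMap.BilinForm k A := (LinearMap.mul k A).compr₂ ε
  have hB : B.Nondegenerate := .ofSeparatingLeft hnd
  refine ⟨(B.flip.toDual hB.flip).trans (B.toDual hB).symm, fun x y => ?_⟩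
  exact (B.apply_toDual_symm_apply (hB := hB) (B.flip.toDual hB.flip y) x).symm

end Frobenius

open Frobenius in
/-- For a finite-dimensional algebra `A` over a field `k` with nondegenerate
Frobenius form `ε`, there is a unique `k`-linear `σ : A → A` with `ε(x·y) = ε(σ(y)·x)` for
all `x, y`, and any such `σ` is a `k`-algebra automorphism. -/
theorem statement13 (k : Type) [Field k] (A : Type) [Ring A] [Algebra k A]
    [FiniteDimensional k A]
    (ε : A →ₗ[k] k)
    (hnd : ∀ x, (∀ y, ε (x * y) = 0) → x = 0) :
    (∃! σ : A → A, IsLinearMap k σ ∧ ∀ x y, ε (x * y) = ε (σ y * x)) ∧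
    (∀ σ : A → A, IsLinearMap k σ → (∀ x y, ε (x * y) = ε (σ y * x)) →
      Function.Bijective σ ∧ σ 1 = 1 ∧ ∀ x y, σ (x * y) = σ x * σ y) := by
  obtain ⟨σ₀, hσ₀⟩ := exists_linearEquiv_isNakayama hnd
  refine ⟨⟨σ₀, ⟨σ₀.toLinearMap.isLinear, hσ₀⟩, fun σ hσ => IsNakayama.eq hnd hσ.2 hσ₀⟩, ?_⟩
  intro σ _ hσ
  exact ⟨IsNakayama.eq hnd hσ hσ₀ ▸ σ₀.bijective, IsNakayama.map_one hnd hσ,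
    IsNakayama.map_mul hnd hσ⟩
end

section
/- Let n ≥ 1 and let * : M_n(ℂ) → M_n(ℂ) be a ℂ-linear involution ((a·b)* = b*·a* for all a,b and (a*)* = a). Then there exists a ℂ-algebra automorphism ω of M_n(ℂ) such that either (1) ω((ω⁻¹(a))*) = aᵀ for all a ∈ M_n(ℂ), or (2) n is even and ω((ω⁻¹(a))*) = Ω·aᵀ·Ω⁻¹ for all a ∈ M_n(ℂ), where Ω is the block-diagonal n×n matrix with n/2 diagonal blocks equal to [[0,1],[−1,0]]. In particular, when n is odd, alternative (1) holds. -/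
/-!
Composing `st` with the transpose gives an algebra automorphism of `Mₙ(ℂ)`, which is inner
(Skolem–Noether), so `st a * u = u * aᵀ` for an invertible `u`. Since `st` is an involution,
`u` and `uᵀ` both intertwine `a ↦ (st a)ᵀ` with the identity, so `uᵀ = ε • u` with `ε ^ 2 = 1`.
An invertible `g` with `g * c = c * gᵀ` has a square root `h` that is a polynomial in `g`
(Hensel lifting of `√X` modulo an annihilating polynomial of `g`), hence `h * c = c * hᵀ` and
`g * c = h * c * hᵀ`. For `g = u, c = 1` and for `g = -(u * Ω), c = Ω` this writes `u` as
`h * hᵀ` or `h * Ω * hᵀ`, and conjugating by `h` turns `st` into `a ↦ aᵀ` or `a ↦ Ω * aᵀ * Ω⁻¹`.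
An invertible skew-symmetric matrix has even size, which settles odd `n`.
-/

open Polynomial

theorem IsCoprime.exists_mul_dvd_sq_sub {R : Type*} [CommRing R] {a b x q₁ q₂ : R}
    (hab : IsCoprime a b) (h₁ : a ∣ q₁ ^ 2 - x) (h₂ : b ∣ q₂ ^ 2 - x) :
    ∃ q, a * b ∣ q ^ 2 - x := by
  obtain ⟨u, v, huv⟩ := id hab
  -- Chinese remainder: the witness is `≡ q₁ [mod a]` and `≡ q₂ [mod b]`.
  refine ⟨u * a * q₂ + v * b * q₁, hab.mul_dvd ?_ ?_⟩
  · have : (u * a * q₂ + v * b * q₁) ^ 2 - x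
        = (q₁ ^ 2 - x) + a * (u * (q₂ - q₁) * (u * a * q₂ + v * b * q₁ + q₁)) := by
      linear_combination (u * a * q₂ + v * b * q₁ + q₁) * q₁ * huv
    exact this ▸ h₁.add (dvd_mul_right _ _)
  · have : (u * a * q₂ + v * b * q₁) ^ 2 - x
        = (q₂ ^ 2 - x) + b * (v * (q₁ - q₂) * (u * a * q₂ + v * b * q₁ + q₂)) := by
      linear_combination (u * a * q₂ + v * b * q₁ + q₂) * q₂ * huv
    exact this ▸ h₂.add (dvd_mul_right _ _)

section SquareRoot

variable {K : Type*} [Field K] [IsAlgClosed K] [NeZero (2 : K)]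

/-- Newton's iteration for `q ^ 2 = X` converges `(X - C l)`-adically because `2 * q` does not
vanish at `l`. -/
theorem Polynomial.exists_pow_X_sub_C_dvd_sq_sub_X {l : K} (hl : l ≠ 0) (e : ℕ) :
    ∃ q : K[X], (X - C l) ^ (e + 1) ∣ q ^ 2 - X := by
  induction e with
  | zero =>
    obtain ⟨m, hm⟩ := IsAlgClosed.exists_pow_nat_eq l two_pos
    exact ⟨C m, by simp [dvd_iff_isRoot, hm]⟩
  | succ e ih =>
    obtain ⟨q, s, hs⟩ := ih
    have hql : q.eval l ≠ 0 := fun h => hl (by simpa [h] using congrArg (eval l) hs)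
    set d := (X - C l) ^ (e + 1)
    set c := -s.eval l / (2 * q.eval l)
    have hroot : X - C l ∣ s + 2 * C c * q := by
      rw [dvd_iff_isRoot]
      simp only [IsRoot, eval_add, eval_mul, eval_C, eval_ofNat, c]
      field_simp
      ring
    have hd : (X - C l) ^ (e + 1 + 1) ∣ d * d := by
      rw [← pow_add]
      exact pow_dvd_pow _ (by omega)
    refine ⟨q + C c * d, ?_⟩
    have : (q + C c * d) ^ 2 - X = d * (s + 2 * C c * q) + C c ^ 2 * (d * d) := by
      linear_combination hs
    rw [this, pow_succ]
    exact (mul_dvd_mul_left d hroot).add (hd.mul_left _)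

theorem Polynomial.exists_dvd_sq_sub_X {p : K[X]} (hp : ¬X ∣ p) : ∃ q : K[X], p ∣ q ^ 2 - X := by
  induction p using UniqueFactorizationMonoid.induction_on_coprime with
  | h0 => exact absurd (dvd_zero X) hp
  | h1 hu => exact ⟨0, hu.dvd⟩
  | hpr i hprime =>
    cases i with
    | zero => exact ⟨0, by simp⟩
    | succ e =>
      obtain ⟨l, hl⟩ :=
        IsAlgClosed.exists_root _ (degree_pos_of_irreducible hprime.irreducible).ne'
      have hassoc : Associated (X - C l) _ :=
        (irreducible_X_sub_C l).associated_of_dvd hprime.irreducible (dvd_iff_isRoot.mpr hl)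
      have hl0 : l ≠ 0 := by
        rintro rfl
        exact hp (dvd_pow (by simpa using hassoc.dvd) e.succ_ne_zero)
      obtain ⟨q, hq⟩ := exists_pow_X_sub_C_dvd_sq_sub_X hl0 e
      exact ⟨q, hassoc.pow_pow.dvd_iff_dvd_left.mp hq⟩
  | hcp hxy hx hy =>
    obtain ⟨q₁, h₁⟩ := hx fun h => hp (h.mul_right _)
    obtain ⟨q₂, h₂⟩ := hy fun h => hp (h.mul_left _)
    exact hxy.isCoprime.exists_mul_dvd_sq_sub h₁ h₂

theorem IsUnit.exists_aeval_sq_eq {A : Type*} [Ring A] [Algebra K A] {g : A} (hg : IsUnit g)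
    (hint : IsIntegral K g) : ∃ q : K[X], aeval g q ^ 2 = g := by
  obtain ⟨p, hmonic, hp⟩ := hint
  obtain ⟨r, hpr, hXr⟩ := p.exists_eq_pow_rootMultiplicity_mul_and_not_dvd hmonic.ne_zero 0
  have hr : aeval g r = 0 := by
    rw [← aeval_def, hpr, map_mul, map_pow, map_sub, aeval_X, aeval_C, map_zero, sub_zero] at hp
    exact (hg.pow _).mul_right_eq_zero.mp hp
  obtain ⟨q, s, hs⟩ := exists_dvd_sq_sub_X (p := r) (by simpa using hXr)
  refine ⟨q, sub_eq_zero.mp ?_⟩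
  simpa [hr] using congrArg (aeval g) hs

end SquareRoot

theorem SemiconjBy.aeval {R A : Type*} [CommSemiring R] [Semiring A] [Algebra R A] {c x y : A}
    (h : SemiconjBy c x y) (q : R[X]) : SemiconjBy c (aeval x q) (aeval y q) := by
  induction q using Polynomial.induction_on with
  | C a => rw [aeval_C, aeval_C]; exact (Algebra.commutes a c).symm
  | add p q hp hq => simpa using hp.add_right hq
  | monomial k a ih => simpa [pow_succ, ← mul_assoc] using ih.mul_right h

namespace Matrix

section StandardSymplectic

def standardSymplectic (R : Type*) [Ring R] (n : ℕ) : Matrix (Fin n) (Fin n) R :=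
  of fun i j =>
    if i.val + 1 = j.val ∧ i.val % 2 = 0 then 1
    else if j.val + 1 = i.val ∧ j.val % 2 = 0 then -1 else 0

variable {R : Type*} [Ring R]

theorem standardSymplectic_transpose (n : ℕ) :
    (standardSymplectic R n)ᵀ = -standardSymplectic R n := by
  ext i j
  simp only [standardSymplectic, transpose_apply, neg_apply, of_apply]
  split_ifs <;> first | simp | omega

theorem standardSymplectic_eq_submatrix_blockDiagonal (m : ℕ) :
    standardSymplectic R (m * 2) =
      (blockDiagonal fun _ : Fin m => standardSymplectic R 2).submatrix
        ((Equiv.prodComm _ _).trans finProdFinEquiv).symm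
        ((Equiv.prodComm _ _).trans finProdFinEquiv).symm := by
  ext i j
  simp only [standardSymplectic, of_apply, Equiv.symm_trans, Equiv.prodComm_symm, Equiv.coe_trans,
    Equiv.coe_prodComm, submatrix_apply, Function.comp_apply, finProdFinEquiv_symm_apply,
    Prod.swap_prod_mk, blockDiagonal_apply, Fin.ext_iff, Fin.coe_divNat, Fin.coe_modNat, dvd_refl,
    Nat.mod_mod_of_dvd]
  split_ifs <;> first | rfl | (exfalso; omega)

theorem standardSymplectic_two_mul_self :
    standardSymplectic R 2 * standardSymplectic R 2 = -1 := by
  ext i j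
  fin_cases i <;> fin_cases j <;> simp [standardSymplectic, mul_apply, Fin.sum_univ_two]

theorem standardSymplectic_mul_self {n : ℕ} (hn : Even n) :
    standardSymplectic R n * standardSymplectic R n = -1 := by
  obtain ⟨m, rfl⟩ : ∃ m, n = m * 2 :=
    ⟨n / 2, (Nat.div_mul_cancel (even_iff_two_dvd.mp hn)).symm⟩
  rw [standardSymplectic_eq_submatrix_blockDiagonal, submatrix_mul_equiv, ← blockDiagonal_mul]
  simp only [standardSymplectic_two_mul_self]
  rw [← Pi.neg_def, ← Pi.one_def, blockDiagonal_neg, blockDiagonal_one]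
  exact congrArg Neg.neg (submatrix_one_equiv _)

theorem isUnit_standardSymplectic {n : ℕ} (hn : Even n) : IsUnit (standardSymplectic R n) :=
  ⟨⟨standardSymplectic R n, -standardSymplectic R n, by rw [mul_neg, standardSymplectic_mul_self hn, neg_neg],
    by rw [neg_mul, standardSymplectic_mul_self hn, neg_neg]⟩, rfl⟩

end StandardSymplectic

variable {ι K : Type*} [Fintype ι] [DecidableEq ι]

theorem transpose_aeval [CommSemiring K] (g : Matrix ι ι K) (q : K[X]) :
    (aeval g q)ᵀ = aeval gᵀ q := by
  have hC (a : K) : (algebraMap K (Matrix ι ι K) a)ᵀ = algebraMap K _ a := by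
    simp [algebraMap_eq_diagonal]
  induction q using Polynomial.induction_on with
  | C a => simp [hC]
  | add p q hp hq => simp [hp, hq]
  | monomial k a ih => simp [transpose_pow, hC, Algebra.commutes]

variable [Field K]

theorem exists_isUnit_algEquiv_apply_mul_eq (φ : Matrix ι ι K ≃ₐ[K] Matrix ι ι K) :
    ∃ u : Matrix ι ι K, IsUnit u ∧ ∀ a, φ a * u = u * a := by
  obtain ⟨T, hT⟩ :=
    ((toLinAlgEquiv'.symm.trans φ).trans toLinAlgEquiv').eq_linearEquivConjAlgEquiv
  refine ⟨LinearMap.toMatrix' T.toLinearMap,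
    LinearMap.isUnit_toMatrix'_iff.mpr ((Module.End.isUnit_iff _).mpr T.bijective), fun a => ?_⟩
  have hφ : toLin' (φ a) = T.toLinearMap ∘ₗ toLin' a ∘ₗ T.symm.toLinearMap := by
    have := congrArg (· (toLinAlgEquiv' a)) hT
    simp only [AlgEquiv.trans_apply, AlgEquiv.symm_apply_apply,
      LinearEquiv.conjAlgEquiv_apply] at this
    exact this
  apply toLin'.injective
  ext x
  simp [toLin'_mul, hφ]

theorem exists_eq_smul_of_forall_mul_eq {f : Matrix ι ι K → Matrix ι ι K} {u w : Matrix ι ι K}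
    (hu : IsUnit u) (hfu : ∀ a, u * f a = a * u) (hfw : ∀ a, w * f a = a * w) :
    ∃ c : K, w = c • u := by
  have hud := (isUnit_iff_isUnit_det u).mp hu
  have hf (a) : f a * u⁻¹ = u⁻¹ * a :=
    calc f a * u⁻¹ = u⁻¹ * (u * f a) * u⁻¹ := by rw [← mul_assoc, nonsing_inv_mul _ hud, one_mul]
      _ = u⁻¹ * a := by rw [hfu, mul_assoc, mul_assoc, mul_nonsing_inv _ hud, mul_one]
  obtain ⟨c, hc⟩ := mem_range_scalar_of_commute_single (M := w * u⁻¹) fun i j _ =>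
    (calc w * u⁻¹ * single i j 1 = w * f (single i j 1) * u⁻¹ := by rw [mul_assoc, ← hf, mul_assoc]
      _ = single i j 1 * (w * u⁻¹) := by rw [hfw, mul_assoc]).symm
  refine ⟨c, ?_⟩
  calc w = w * u⁻¹ * u := by rw [mul_assoc, nonsing_inv_mul _ hud, mul_one]
    _ = c • u := by rw [← hc, scalar_apply, ← smul_eq_diagonal_mul]

section Involution

variable {st : Matrix ι ι K → Matrix ι ι K}

theorem exists_isUnit_mul_eq_mul_transpose (hlin : IsLinearMap K st)
    (hanti : ∀ a b, st (a * b) = st b * st a) (hinvol : Function.Involutive st) :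
    ∃ u : Matrix ι ι K, IsUnit u ∧ ∀ a, st a * u = u * aᵀ := by
  have hst1 : st 1 = 1 := by simpa [hinvol 1] using (hanti 1 (st 1)).symm
  let φ : Matrix ι ι K ≃ₐ[K] Matrix ι ι K := AlgEquiv.ofLinearEquiv
    ((transposeLinearEquiv ι ι K K).trans (.ofInvolutive (hlin.mk' st) hinvol))
    (show st 1ᵀ = 1 by rw [transpose_one, hst1])
    (fun a b => show st (a * b)ᵀ = st aᵀ * st bᵀ by rw [transpose_mul, hanti])
  obtain ⟨u, hu, hφ⟩ := exists_isUnit_algEquiv_apply_mul_eq φ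
  exact ⟨u, hu, fun a => hφ aᵀ⟩

theorem transpose_eq_or_eq_neg (hinvol : Function.Involutive st) {u : Matrix ι ι K}
    (hu : IsUnit u) (hst : ∀ a, st a * u = u * aᵀ) : uᵀ = u ∨ uᵀ = -u := by
  obtain ⟨c, hc⟩ := exists_eq_smul_of_forall_mul_eq (f := fun a => (st a)ᵀ) hu
    (fun a => by rw [← hst, hinvol])
    (fun a => by rw [← transpose_mul, hst, transpose_mul, transpose_transpose])
  have hc2 : (c * c - 1) • u = 0 := by
    have := congrArg transpose hc
    rw [transpose_transpose, transpose_smul, hc, smul_smul] at this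
    rw [sub_smul, one_smul, ← this, sub_self]
  rcases smul_eq_zero.mp hc2 with h | rfl
  · rcases mul_self_eq_one_iff.mp (sub_eq_zero.mp h) with rfl | rfl <;> simp [hc]
  · simp

theorem exists_algEquiv_conj_eq {u h c : Matrix ι ι K} (hst : ∀ a, st a * u = u * aᵀ)
    (hh : IsUnit h) (hc : IsUnit c) (hu : u = h * c * hᵀ) :
    ∃ ω : Matrix ι ι K ≃ₐ[K] Matrix ι ι K, ∀ a, ω (st (ω.symm a)) = c * aᵀ * c⁻¹ := by
  obtain ⟨h, rfl⟩ := hh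
  refine ⟨MulSemiringAction.toAlgEquiv K _ (ConjAct.toConjAct h⁻¹), fun a => ?_⟩
  simp only [MulSemiringAction.toAlgEquiv_apply, MulSemiringAction.toAlgEquiv_symm_apply,
    ConjAct.units_smul_def, map_inv, ConjAct.ofConjAct_toConjAct, inv_inv]
  set H : Matrix ι ι K := ↑h
  set H' : Matrix ι ι K := ↑h⁻¹
  set x := H * a * H'
  have hx : x * H = H * a := by simp only [x, H, H', mul_assoc, Units.inv_mul, mul_one]
  have key : st x * H * c * Hᵀ = H * c * aᵀ * Hᵀ :=
    calc st x * H * c * Hᵀ = st x * u := by rw [hu]; simp only [mul_assoc]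
      _ = u * xᵀ := hst x
      _ = H * c * (x * H)ᵀ := by rw [hu, transpose_mul x, mul_assoc]
      _ = H * c * aᵀ * Hᵀ := by rw [hx, transpose_mul]; simp only [mul_assoc]
  have key' : H' * st x * H * c = c * aᵀ := by
    rw [((isUnit_transpose H).mpr h.isUnit).mul_left_inj] at key
    simp only [mul_assoc] at key ⊢
    rw [key, ← mul_assoc, Units.inv_mul, one_mul]
  calc H' * st x * H = H' * st x * H * c * c⁻¹ := by
        rw [mul_assoc _ c, mul_nonsing_inv _ ((isUnit_iff_isUnit_det c).mp hc), mul_one]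
    _ = c * aᵀ * c⁻¹ := by rw [key']

end Involution

theorem even_card_of_transpose_eq_neg [NeZero (2 : K)] {u : Matrix ι ι K} (hu : IsUnit u)
    (h : uᵀ = -u) : Even (Fintype.card ι) := by
  by_contra hodd
  have := congrArg det h
  rw [det_transpose, det_neg, (Nat.not_even_iff_odd.mp hodd).neg_one_pow, neg_one_mul] at this
  have h2 : 2 * u.det = 0 := by linear_combination this
  exact ((isUnit_iff_isUnit_det u).mp hu).ne_zero ((mul_eq_zero.mp h2).resolve_left two_ne_zero)

section AlgClosed

variable [IsAlgClosed K] [NeZero (2 : K)]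

theorem exists_isUnit_mul_eq_mul_mul_transpose {g c : Matrix ι ι K} (hg : IsUnit g)
    (hgc : g * c = c * gᵀ) : ∃ h : Matrix ι ι K, IsUnit h ∧ g * c = h * c * hᵀ := by
  obtain ⟨q, hq⟩ := hg.exists_aeval_sq_eq (Algebra.IsIntegral.isIntegral (R := K) g)
  have hcomm : aeval g q * c = c * (aeval g q)ᵀ := by
    rw [transpose_aeval]
    exact ((show SemiconjBy c gᵀ g from hgc.symm).aeval q).symm
  refine ⟨aeval g q, (isUnit_pow_iff two_ne_zero).mp (hq.symm ▸ hg), ?_⟩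
  rw [mul_assoc, ← hcomm, ← mul_assoc, ← sq, hq]

theorem exists_isUnit_eq_mul_standardSymplectic_mul_transpose {n : ℕ} (hn : Even n)
    {u : Matrix (Fin n) (Fin n) K} (hu : IsUnit u) (hskew : uᵀ = -u) :
    ∃ h, IsUnit h ∧ u = h * standardSymplectic K n * hᵀ := by
  set Ω := standardSymplectic K n
  have hΩ : Ω * Ω = -1 := standardSymplectic_mul_self hn
  have hgΩ : -(u * Ω) * Ω = u := by rw [neg_mul, mul_assoc, hΩ, mul_neg_one, neg_neg]
  have hg : IsUnit (-(u * Ω)) := (hu.mul (isUnit_standardSymplectic hn)).neg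
  have hgc : -(u * Ω) * Ω = Ω * (-(u * Ω))ᵀ := by
    rw [hgΩ, transpose_neg, transpose_mul, standardSymplectic_transpose, hskew, neg_mul_neg,
      mul_neg, ← mul_assoc, hΩ, neg_one_mul, neg_neg]
  obtain ⟨h, hh, huh⟩ := exists_isUnit_mul_eq_mul_mul_transpose hg hgc
  exact ⟨h, hh, hgΩ ▸ huh⟩

end AlgClosed

end Matrix

open Matrix

theorem statement16_general (n : ℕ)
    (st : Matrix (Fin n) (Fin n) ℂ → Matrix (Fin n) (Fin n) ℂ)
    (hlin : IsLinearMap ℂ st)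
    (hanti : ∀ a b, st (a * b) = st b * st a)
    (hinvol : ∀ a, st (st a) = a) :
    (∃ ω : Matrix (Fin n) (Fin n) ℂ ≃ₐ[ℂ] Matrix (Fin n) (Fin n) ℂ,
      (∀ a, ω (st (ω.symm a)) = a.transpose) ∨
      (Even n ∧ ∀ a, ω (st (ω.symm a)) =
        (Matrix.of fun i j : Fin n =>
          if i.val + 1 = j.val ∧ i.val % 2 = 0 then (1 : ℂ)
          else if j.val + 1 = i.val ∧ j.val % 2 = 0 then -1 else 0) * a.transpose *
        (Matrix.of fun i j : Fin n =>
          if i.val + 1 = j.val ∧ i.val % 2 = 0 then (1 : ℂ)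
          else if j.val + 1 = i.val ∧ j.val % 2 = 0 then -1 else 0)⁻¹)) ∧
    (Odd n → ∃ ω : Matrix (Fin n) (Fin n) ℂ ≃ₐ[ℂ] Matrix (Fin n) (Fin n) ℂ,
      ∀ a, ω (st (ω.symm a)) = a.transpose) := by
  obtain ⟨u, hu, hst⟩ := exists_isUnit_mul_eq_mul_transpose hlin hanti hinvol
  rcases transpose_eq_or_eq_neg hinvol hu hst with hsymm | hskew
  · obtain ⟨h, hh, huh⟩ :=
      exists_isUnit_mul_eq_mul_mul_transpose hu (c := 1) (by rw [mul_one, one_mul, hsymm])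
    obtain ⟨ω, hω⟩ := exists_algEquiv_conj_eq hst hh isUnit_one ((mul_one u).symm.trans huh)
    have hT : ∀ a, ω (st (ω.symm a)) = aᵀ := fun a => by simpa using hω a
    exact ⟨⟨ω, .inl hT⟩, fun _ => ⟨ω, hT⟩⟩
  · have heven : Even n := by simpa using even_card_of_transpose_eq_neg hu hskew
    obtain ⟨h, hh, huh⟩ := exists_isUnit_eq_mul_standardSymplectic_mul_transpose heven hu hskew
    obtain ⟨ω, hω⟩ := exists_algEquiv_conj_eq hst hh (isUnit_standardSymplectic heven) huh
    exact ⟨⟨ω, .inr ⟨heven, hω⟩⟩, fun hodd => absurd heven (Nat.not_even_iff_odd.mpr hodd)⟩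

/-- Every ℂ-linear involution of `Mₙ(ℂ)` is, up to conjugation by a ℂ-algebra
automorphism `ω`, either the transpose, or (when `n` is even) `a ↦ Ω·aᵀ·Ω⁻¹` for the
standard antisymmetric matrix `Ω`; when `n` is odd the first alternative holds. -/
theorem statement16 (n : ℕ) (hn : 1 ≤ n)
    (st : Matrix (Fin n) (Fin n) ℂ → Matrix (Fin n) (Fin n) ℂ)
    (hlin : IsLinearMap ℂ st)
    (hanti : ∀ a b, st (a * b) = st b * st a)
    (hinvol : ∀ a, st (st a) = a) :
    (∃ ω : Matrix (Fin n) (Fin n) ℂ ≃ₐ[ℂ] Matrix (Fin n) (Fin n) ℂ,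
      (∀ a, ω (st (ω.symm a)) = a.transpose) ∨
      (Even n ∧ ∀ a, ω (st (ω.symm a)) =
        (Matrix.of fun i j : Fin n =>
          if i.val + 1 = j.val ∧ i.val % 2 = 0 then (1 : ℂ)
          else if j.val + 1 = i.val ∧ j.val % 2 = 0 then -1 else 0) * a.transpose *
        (Matrix.of fun i j : Fin n =>
          if i.val + 1 = j.val ∧ i.val % 2 = 0 then (1 : ℂ)
          else if j.val + 1 = i.val ∧ j.val % 2 = 0 then -1 else 0)⁻¹)) ∧
    (Odd n → ∃ ω : Matrix (Fin n) (Fin n) ℂ ≃ₐ[ℂ] Matrix (Fin n) (Fin n) ℂ,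
      ∀ a, ω (st (ω.symm a)) = a.transpose) :=
  statement16_general n st hlin hanti hinvol
end

section
/- Let n ≥ 1, let x ∈ M_n(ℂ) be invertible with x² a scalar multiple of the identity (x² ∈ ℂ·1), and let R ∈ ℂ satisfy R·Tr(x⁻¹) = 1. Define ε : M_n(ℂ) → ℂ by ε(a) = Tr(x·a), and define z := Σ_{l,m,p,q} E_{lm}·x⁻¹·E_{pq}·x⁻¹·E_{ml}·E_{qp} ∈ M_n(ℂ). Then x² = R·Tr(x)·1, Tr(x) ≠ 0, z = x⁻², and for every natural number g, R·ε(z^g) = R^{1−g}·Tr(x)^{1−g}, where powers with negative integer exponents are taken in ℂ. -/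
/-!
Since `x² = c • 1` with `c ≠ 0`, the inverse is `x⁻¹ = c⁻¹ • x`, so `Tr x⁻¹ = c⁻¹ Tr x` and the
normalisation `R Tr x⁻¹ = 1` forces `c = R Tr x`, in particular `Tr x ≠ 0`. The sum of words in
matrix units contracts to `x⁻¹ x⁻¹ = c⁻¹ • 1`, so `ε(z^g) = c^{-g} Tr x` and
`R ε(z^g) = c^{1-g} = (R Tr x)^{1-g}`.
-/

namespace Matrix

variable {ι : Type*} [Fintype ι] [DecidableEq ι]

theorem sum_single_mul_single_mul_single_mul_single {α : Type*} [CommSemiring α]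
    (A : Matrix ι ι α) :
    ∑ l, ∑ m, ∑ p, ∑ q, single l m (1 : α) * A * single p q 1 * A *
      single m l 1 * single q p 1 = A * A := by
  ext i j
  simp [mul_apply, single, sum_apply, mul_ite, Finset.sum_ite_eq,
    Finset.sum_ite_eq', ite_and, mul_comm]

variable {K : Type*} [Field K] {x : Matrix ι ι K} {c : K}

theorem inv_eq_smul_of_sq_eq_smul_one (hc : c ≠ 0) (hx : x ^ 2 = c • 1) : x⁻¹ = c⁻¹ • x :=
  inv_eq_right_inv <| by rw [Matrix.mul_smul, ← sq, hx, smul_smul, inv_mul_cancel₀ hc, one_smul]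

theorem inv_mul_inv_eq_smul_one_of_sq_eq_smul_one (hc : c ≠ 0) (hx : x ^ 2 = c • 1) :
    x⁻¹ * x⁻¹ = c⁻¹ • 1 := by
  rw [inv_eq_smul_of_sq_eq_smul_one hc hx, smul_mul_smul_comm, ← sq x, hx, smul_smul]
  congr 1
  field_simp

theorem trace_inv_of_sq_eq_smul_one (hc : c ≠ 0) (hx : x ^ 2 = c • 1) :
    trace x⁻¹ = c⁻¹ * trace x := by
  rw [inv_eq_smul_of_sq_eq_smul_one hc hx, trace_smul, smul_eq_mul]

end Matrix

open Matrix in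
/-- For invertible `x ∈ Mₙ(ℂ)` with `x²` scalar and `R·Tr(x⁻¹) = 1`, with
`ε(a) = Tr(x·a)` and `z = Σ E_{lm}·x⁻¹·E_{pq}·x⁻¹·E_{ml}·E_{qp}`, one has
`x² = R·Tr(x)·1`, `Tr(x) ≠ 0`, `z = x⁻²`, and `R·ε(z^g) = R^{1-g}·Tr(x)^{1-g}` for all `g`. -/
theorem statement17 (n : ℕ) (hn : 1 ≤ n) (x : Matrix (Fin n) (Fin n) ℂ) (hx : IsUnit x)
    (hx2 : ∃ c : ℂ, x ^ 2 = c • (1 : Matrix (Fin n) (Fin n) ℂ))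
    (R : ℂ) (hR : R * Matrix.trace x⁻¹ = 1)
    (ε : Matrix (Fin n) (Fin n) ℂ → ℂ) (hε : ∀ a, ε a = Matrix.trace (x * a))
    (z : Matrix (Fin n) (Fin n) ℂ)
    (hz : z = ∑ l, ∑ m, ∑ p, ∑ q,
      Matrix.single l m (1 : ℂ) * x⁻¹ * Matrix.single p q 1 * x⁻¹ *
        Matrix.single m l 1 * Matrix.single q p 1) :
    x ^ 2 = (R * Matrix.trace x) • (1 : Matrix (Fin n) (Fin n) ℂ) ∧
    Matrix.trace x ≠ 0 ∧
    z = x⁻¹ * x⁻¹ ∧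
    ∀ g : ℕ, R * ε (z ^ g) = R ^ ((1 : ℤ) - g) * Matrix.trace x ^ ((1 : ℤ) - g) := by
  have : Nonempty (Fin n) := ⟨⟨0, hn⟩⟩
  obtain ⟨c, hc⟩ := hx2
  have hc0 : c ≠ 0 := by
    rintro rfl
    exact (hx.pow 2).ne_zero (by rwa [zero_smul] at hc)
  rw [trace_inv_of_sq_eq_smul_one hc0 hc] at hR
  have hT : trace x ≠ 0 := by
    rintro h
    simp [h] at hR
  have hcR : c = R * trace x := by
    field_simp at hR
    exact hR.symm
  have hz' : z = x⁻¹ * x⁻¹ := hz.trans (sum_single_mul_single_mul_single_mul_single _)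
  refine ⟨hcR ▸ hc, hT, hz', fun g => ?_⟩
  rw [hε, hz', inv_mul_inv_eq_smul_one_of_sq_eq_smul_one hc0 hc, smul_pow, one_pow, Matrix.mul_smul,
    mul_one, trace_smul, smul_eq_mul, ← mul_zpow, ← hcR, zpow_sub₀ hc0, zpow_one, zpow_natCast,
    hcR, inv_pow]
  ring
end

section
/- Let V be a finite-dimensional vector space over the field 𝔽₂ = ℤ/2ℤ, let b : V × V → 𝔽₂ be a nondegenerate bilinear form (b(x,y) = 0 for all y implies x = 0), and let q : V → 𝔽₂ be a quadratic form refining b, i.e. q(x + y) = q(x) + q(y) + b(x,y) for all x, y ∈ V. Then (Σ_{α ∈ V} (−1)^{q(α)})² = |V|, where the sum is taken in ℤ and (−1)^{q(α)} denotes 1 if q(α) = 0 and −1 if q(α) = 1, and |V| is the cardinality of V. -/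
/-- For a finite-dimensional `𝔽₂`-vector space `V` with nondegenerate bilinear
form `b` and a quadratic form `q` refining `b` (`q(x+y) = q(x)+q(y)+b(x,y)`), one has
`(Σ_{α ∈ V} (-1)^{q(α)})² = |V|`. -/
theorem statement19 (V : Type) [AddCommGroup V] [Module (ZMod 2) V]
    [FiniteDimensional (ZMod 2) V] [Fintype V]
    (b : V →ₗ[ZMod 2] V →ₗ[ZMod 2] ZMod 2)
    (hnd : ∀ x, (∀ y, b x y = 0) → x = 0)
    (q : V → ZMod 2)
    (hq : ∀ x y, q (x + y) = q x + q y + b x y) :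
    (∑ α : V, if q α = 0 then (1 : ℤ) else -1) ^ 2 = Fintype.card V := by
  classical
  set χ : ZMod 2 → ℤ := fun a => if a = 0 then 1 else -1 with hχdef
  have hone : ∀ a : ZMod 2, a ≠ 0 → a = 1 := by decide
  have hχ : ∀ a c : ZMod 2, χ (a + c) = χ a * χ c := by decide
  have h2 : ∀ a c d : ZMod 2, a + (a + c + d) = c + d := by decide
  have hq0 : q 0 = 0 := by
    have h := hq 0 0
    simp only [add_zero, map_zero, LinearMap.zero_apply] at h
    have h' : q 0 + q 0 = 0 := CharTwo.add_self_eq_zero _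
    rw [h'] at h
    exact h
  -- injectivity of x ↦ b x
  have hinj : Function.Injective b := by
    intro x y hxy
    have h0 : b (x - y) = 0 := by rw [map_sub, hxy, sub_self]
    have := hnd (x - y) (fun z => by rw [h0]; rfl)
    exact sub_eq_zero.mp this
  have hsurj : Function.Surjective b := by
    have hfr : Module.finrank (ZMod 2) V
        = Module.finrank (ZMod 2) (V →ₗ[ZMod 2] ZMod 2) :=
      (Subspace.dual_finrank_eq).symm
    exact (LinearMap.injective_iff_surjective_of_finrank_eq_finrank hfr).mp hinj
  have hz : ∀ z : V, z ≠ 0 → ∃ x, b x z = 1 := by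
    intro z hzne
    by_contra h
    push_neg at h
    have h0 : ∀ x, b x z = 0 := fun x => by
      by_contra hx; exact h x (hone _ hx)
    apply hzne
    rw [← Module.forall_dual_apply_eq_zero_iff (ZMod 2)]
    intro f
    obtain ⟨x, hx⟩ := hsurj f
    rw [← hx]; exact h0 x
  have hinner : ∀ z : V, (∑ x : V, χ (b x z))
      = if z = 0 then (Fintype.card V : ℤ) else 0 := by
    intro z
    by_cases hz0 : z = 0
    · subst hz0
      simp [hχdef]
    · obtain ⟨x₀, hx₀⟩ := hz z hz0
      have key : (∑ x : V, χ (b x z)) = -∑ x : V, χ (b x z) := by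
        calc ∑ x : V, χ (b x z) = ∑ x : V, χ (b (x + x₀) z) :=
              (Fintype.sum_equiv (Equiv.addRight x₀) _ _ (fun x => rfl)).symm
          _ = ∑ x : V, -χ (b x z) := by
              refine Finset.sum_congr rfl fun x _ => ?_
              rw [map_add, LinearMap.add_apply, hχ, hx₀]
              simp [hχdef]
          _ = -∑ x : V, χ (b x z) := by rw [Finset.sum_neg_distrib]
      rw [if_neg hz0]
      linarith [key]
  show (∑ α : V, χ (q α)) ^ 2 = Fintype.card V
  calc (∑ α : V, χ (q α)) ^ 2
      = ∑ x : V, ∑ y : V, χ (q x) * χ (q y) := by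
        rw [pow_two, Finset.sum_mul_sum]
    _ = ∑ x : V, ∑ z : V, χ (q x) * χ (q (x + z)) := by
        refine Finset.sum_congr rfl fun x _ => ?_
        exact (Fintype.sum_equiv (Equiv.addLeft x) _ _ (fun z => rfl)).symm
    _ = ∑ x : V, ∑ z : V, χ (q z) * χ (b x z) := by
        refine Finset.sum_congr rfl fun x _ => Finset.sum_congr rfl fun z _ => ?_
        rw [← hχ, ← hχ, hq, h2]
    _ = ∑ z : V, ∑ x : V, χ (q z) * χ (b x z) := Finset.sum_comm
    _ = ∑ z : V, χ (q z) * ∑ x : V, χ (b x z) := by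
        refine Finset.sum_congr rfl fun z _ => ?_
        rw [Finset.mul_sum]
    _ = ∑ z : V, χ (q z) * (if z = 0 then (Fintype.card V : ℤ) else 0) := by
        refine Finset.sum_congr rfl fun z _ => by rw [hinner z]
    _ = ∑ z : V, (if z = 0 then χ (q z) * (Fintype.card V : ℤ) else 0) := by
        refine Finset.sum_congr rfl fun z _ => ?_
        split <;> simp
    _ = χ (q 0) * (Fintype.card V : ℤ) := by
        rw [Finset.sum_ite_eq' Finset.univ (0 : V)
          (fun z => χ (q z) * (Fintype.card V : ℤ))]
        simp
    _ = Fintype.card V := by rw [hq0]; simp [hχdef]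
end
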